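/- arXiv:0811.2768 — 8 statements merged into one kernel-verified Lean document; each statement's English description precedes it below -/
import Mathlib

section
/- Let V be a symplectic vector space with symplectic form ω, L ⊂ V a Lagrangian subspace, and p : V → V/L the projection. For a linear subspace Z ⊂ V, the following are equivalent: (i) p(Z) ⊇ p(Z^⊥), where Z^⊥ is the orthogonal complement of Z with respect to ω; (ii) p(Z)^⊥ ⊆ Z ∩ L, where p(Z)^⊥ denotes the annihilator of p(Z) in L under the identification L ≅ (V/L)*. -/
open Submodule Module

/-- For a symplectic vector space `(V, ω)` with Lagrangian subspace `L` and projection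
`p : V → V/L`, a subspace `Z ⊆ V` satisfies `p(Z) ⊇ p(Z^⊥)` iff the annihilator of `p(Z)`
inside `L` (under the identification `L ≅ (V/L)*` given by `ω`) is contained in `Z ⊓ L`. -/
theorem weakly_coisotropic_tfae {K V : Type*} [Field K] [AddCommGroup V] [Module K V]
    [FiniteDimensional K V]
    (ω : LinearMap.BilinForm K V) (halt : ω.IsAlt) (hnd : ω.Nondegenerate)
    (L : Submodule K V) (hL : ω.orthogonal L = L)
    (Z : Submodule K V) :
    (Submodule.map L.mkQ (ω.orthogonal Z) ≤ Submodule.map L.mkQ Z) ↔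
      (∀ l ∈ L, (∀ z ∈ Z, ω l z = 0) → l ∈ Z ⊓ L) := by
  have hrefl : ω.IsRefl := halt.isRefl
  -- Step 1: map mkQ (Z^⊥) ≤ map mkQ Z ↔ Z^⊥ ≤ Z ⊔ L
  have h1 : (Submodule.map L.mkQ (ω.orthogonal Z) ≤ Submodule.map L.mkQ Z)
      ↔ ω.orthogonal Z ≤ Z ⊔ L := by
    constructor
    · intro h x hx
      obtain ⟨z, hz, hzx⟩ := h ⟨x, hx, rfl⟩
      have hxz : x - z ∈ L := (Submodule.Quotient.eq L).mp hzx.symm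
      have hxe : x = z + (x - z) := by abel
      rw [hxe]
      exact Submodule.add_mem_sup hz hxz
    · intro h
      calc Submodule.map L.mkQ (ω.orthogonal Z) ≤ Submodule.map L.mkQ (Z ⊔ L) :=
            Submodule.map_mono h
        _ = Submodule.map L.mkQ Z ⊔ Submodule.map L.mkQ L := Submodule.map_sup _ _ _
        _ ≤ Submodule.map L.mkQ Z := by
            rw [Submodule.mkQ_map_self]
            simp
  -- Step 2: Z^⊥ ≤ Z ⊔ L ↔ L ⊓ Z^⊥ ≤ Z
  have h2 : (ω.orthogonal Z ≤ Z ⊔ L) ↔ (L ⊓ ω.orthogonal Z ≤ Z) := by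
    constructor
    · intro h x hx
      obtain ⟨hxL, hxZ⟩ := hx
      -- show x ∈ Z = (Z^⊥)^⊥
      rw [← ω.orthogonal_orthogonal hnd hrefl Z]
      intro w hw
      obtain ⟨z, hz, m, hm, rfl⟩ := Submodule.mem_sup.mp (h hw)
      have h1 : ω z x = 0 := hxZ z hz
      have h2 : ω m x = 0 := by
        have : x ∈ ω.orthogonal L := by rw [hL]; exact hxL
        exact this m hm
      simp [LinearMap.BilinForm.IsOrtho, h1, h2]
    · intro h
      have key : ω.orthogonal (Z ⊔ L) ≤ Z := by
        intro x hx
        refine h ⟨?_, ?_⟩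
        · rw [← hL]
          exact fun n hn => hx n (Submodule.mem_sup_right hn)
        · exact fun n hn => hx n (Submodule.mem_sup_left hn)
      calc ω.orthogonal Z ≤ ω.orthogonal (ω.orthogonal (Z ⊔ L)) :=
            LinearMap.BilinForm.orthogonal_le key
        _ = Z ⊔ L := ω.orthogonal_orthogonal hnd hrefl _
  -- Step 3: RHS ↔ L ⊓ Z^⊥ ≤ Z
  rw [h1, h2]
  constructor
  · intro h l hl hlz
    refine ⟨h ⟨hl, fun z hz => ?_⟩, hl⟩
    exact hrefl _ _ (hlz z hz)
  · intro h x hx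
    exact (h x hx.1 fun z hz => hrefl _ _ (hx.2 z hz)).1
end

section
/- Let V be a 2n-dimensional symplectic vector space, L a Lagrangian subspace, and Z ⊂ V a linear subspace that is weakly coisotropic with respect to L (i.e. p(Z) ⊇ p(Z^⊥) for the projection p : V → V/L). If Z is nonzero then dim Z ≥ n. More precisely, any nonzero weakly coisotropic subspace has dimension at least half the dimension of V. -/
/-!
Weak coisotropy says `Z^⊥ ≤ Z ⊔ L`. Taking orthogonals and using `L^⊥ = L` gives
`Z^⊥ ⊓ L ≤ (Z ⊔ L)^⊥ ≤ Z`. The two inclusions force `dim Z^⊥ ≤ dim Z`, and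
`dim Z^⊥ = 2n - dim Z` by nondegeneracy.
-/

open Submodule Module LinearMap.BilinForm

theorem Submodule.le_sup_of_map_mkQ_le {R M : Type*} [Ring R] [AddCommGroup M] [Module R M]
    {L W Z : Submodule R M} (h : map L.mkQ W ≤ map L.mkQ Z) : W ≤ Z ⊔ L := by
  simpa only [comap_map_mkQ, sup_comm] using map_le_iff_le_comap.mp h

theorem Submodule.finrank_le_of_le_sup_of_inf_le {K V : Type*} [DivisionRing K] [AddCommGroup V]
    [Module K V] [FiniteDimensional K V] {L W Z : Submodule K V}
    (hsup : W ≤ Z ⊔ L) (hinf : W ⊓ L ≤ Z) : finrank K W ≤ finrank K Z := by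
  have hsup' : finrank K ↥(W ⊔ L) ≤ finrank K ↥(Z ⊔ L) := finrank_mono (sup_le hsup le_sup_right)
  have hinf' : finrank K ↥(W ⊓ L) ≤ finrank K ↥(Z ⊓ L) := finrank_mono (le_inf hinf inf_le_right)
  have := finrank_sup_add_finrank_inf_eq W L
  have := finrank_sup_add_finrank_inf_eq Z L
  omega

namespace LinearMap.BilinForm

theorem orthogonal_inf_orthogonal_le_orthogonal_sup {R M : Type*} [CommRing R] [AddCommGroup M]
    [Module R M] (B : LinearMap.BilinForm R M) (N L : Submodule R M) :
    B.orthogonal N ⊓ B.orthogonal L ≤ B.orthogonal (N ⊔ L) := by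
  rintro x ⟨hxN, hxL⟩ y hy
  obtain ⟨n, hn, l, hl, rfl⟩ := mem_sup.mp hy
  simp [hxN n hn, hxL l hl]

theorem orthogonal_inf_le_of_orthogonal_le_sup {K V : Type*} [Field K] [AddCommGroup V]
    [Module K V] [FiniteDimensional K V] {B : LinearMap.BilinForm K V} (hB : B.Nondegenerate)
    (hB₀ : B.IsRefl) {L Z : Submodule K V} (hL : B.orthogonal L = L)
    (h : B.orthogonal Z ≤ Z ⊔ L) : B.orthogonal Z ⊓ L ≤ Z :=
  calc B.orthogonal Z ⊓ L = B.orthogonal Z ⊓ B.orthogonal L := by rw [hL]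
    _ ≤ B.orthogonal (Z ⊔ L) := B.orthogonal_inf_orthogonal_le_orthogonal_sup Z L
    _ ≤ B.orthogonal (B.orthogonal Z) := orthogonal_le h
    _ = Z := orthogonal_orthogonal hB hB₀ Z

end LinearMap.BilinForm

theorem weakly_coisotropic_dim_ge_general {K V : Type*} [Field K] [AddCommGroup V] [Module K V]
    [FiniteDimensional K V] (n : ℕ)
    (ω : LinearMap.BilinForm K V) (halt : ω.IsAlt) (hnd : ω.Nondegenerate)
    (hdim : Module.finrank K V = 2 * n)
    (L : Submodule K V) (hL : ω.orthogonal L = L)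
    (Z : Submodule K V)
    (hwc : Submodule.map L.mkQ (ω.orthogonal Z) ≤ Submodule.map L.mkQ Z) :
    n ≤ Module.finrank K Z := by
  have hsup : ω.orthogonal Z ≤ Z ⊔ L := le_sup_of_map_mkQ_le hwc
  have hinf : ω.orthogonal Z ⊓ L ≤ Z :=
    orthogonal_inf_le_of_orthogonal_le_sup hnd halt.isRefl hL hsup
  have hle := finrank_le_of_le_sup_of_inf_le hsup hinf
  rw [finrank_orthogonal hnd, hdim] at hle
  omega

/-- Let `V` be a `2n`-dimensional symplectic vector space with Lagrangian subspace `L`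
and quotient map `p : V → V/L`. Any nonzero subspace `Z` which is weakly coisotropic with
respect to `L` (i.e. `p(Z) ⊇ p(Z^⊥)`) has dimension at least `n`, half the dimension of `V`. -/
theorem weakly_coisotropic_dim_ge {K V : Type*} [Field K] [AddCommGroup V] [Module K V]
    [FiniteDimensional K V] (n : ℕ)
    (ω : LinearMap.BilinForm K V) (halt : ω.IsAlt) (hnd : ω.Nondegenerate)
    (hdim : Module.finrank K V = 2 * n)
    (L : Submodule K V) (hL : ω.orthogonal L = L)
    (Z : Submodule K V) (hZne : Z ≠ ⊥)
    (hwc : Submodule.map L.mkQ (ω.orthogonal Z) ≤ Submodule.map L.mkQ Z) :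
    n ≤ Module.finrank K Z :=
  weakly_coisotropic_dim_ge_general n ω halt hnd hdim L hL Z hwc
end

section
/- Let V_λ^w denote the irreducible graded representation of sl₂ with highest weight λ and highest weight vector of parity p with w = (−1)^p. Then def(V_λ^w) = (1/2)(λw + w·(1+(−1)^λ)/2 − 1); that is, def(V_λ^w) = (λw + w − 1)/2 if λ is even and (λw − 1)/2 if λ is odd. -/
open LinearMap Module

namespace Sl2GradedModel

variable (K : Type*) [Field K] (n : ℕ)

/-- The action of `h` on the irreducible `sl₂`-representation of highest weight `n`,
in the weight basis `m₀, …, m_n` with `h mᵢ = (n − 2i) mᵢ`. -/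
noncomputable def Hmap : (Fin (n + 1) → K) →ₗ[K] (Fin (n + 1) → K) :=
  LinearMap.pi fun i => ((n : K) - 2 * (i : ℕ)) • LinearMap.proj i

/-- The action of `e`, with `e mᵢ = i (n − i + 1) m_{i−1}` and `e m₀ = 0`;
in coordinates `(E v)ᵢ = (i+1)(n−i) v_{i+1}`. -/
noncomputable def Emap : (Fin (n + 1) → K) →ₗ[K] (Fin (n + 1) → K) :=
  LinearMap.pi fun i =>
    if h : (i : ℕ) + 1 < n + 1 then
      ((((i : ℕ) : K) + 1) * ((n : K) - ((i : ℕ) : K))) • LinearMap.proj (⟨(i : ℕ) + 1, h⟩ : Fin (n + 1))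
    else 0

/-- The action of `f`, with `f mᵢ = m_{i+1}` and `f m_n = 0`;
in coordinates `(F v)ᵢ = v_{i−1}`. -/
noncomputable def Fmap : (Fin (n + 1) → K) →ₗ[K] (Fin (n + 1) → K) :=
  LinearMap.pi fun i =>
    if h : 0 < (i : ℕ) then
      LinearMap.proj (⟨(i : ℕ) - 1, by omega⟩ : Fin (n + 1))
    else 0

/-- The graded piece of parity `q` of the model of `V_n^w`, where the highest weight
vector `m₀` has parity `p` and `mᵢ` has parity `p + i (mod 2)`. -/
def grade (p q : ℕ) : Submodule K (Fin (n + 1) → K) where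
  carrier := {v | ∀ i : Fin (n + 1), (p + (i : ℕ)) % 2 ≠ q % 2 → v i = 0}
  add_mem' := by intro a b ha hb i hi; simp [ha i hi, hb i hi]
  zero_mem' := by intro i _; rfl
  smul_mem' := by intro c a ha i hi; simp [ha i hi]

end Sl2GradedModel

namespace Sl2GradedModel
variable (K : Type*) [Field K] (n : ℕ)

lemma Hmap_apply (v : Fin (n+1) → K) (i : Fin (n+1)) :
    Hmap K n v i = ((n : K) - 2 * (i : ℕ)) * v i := by
  simp [Hmap, LinearMap.pi_apply]

lemma Emap_apply (v : Fin (n+1) → K) (i : Fin (n+1)) :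
    Emap K n v i = if h : (i : ℕ) + 1 < n + 1 then
      ((((i : ℕ) : K) + 1) * ((n : K) - ((i : ℕ) : K))) * v ⟨(i:ℕ)+1, h⟩ else 0 := by
  simp only [Emap, LinearMap.pi_apply]
  split <;> simp_all

variable [CharZero K]

lemma mem_ker_Emap {v : Fin (n+1) → K} :
    v ∈ LinearMap.ker (Emap K n) ↔ ∀ j : Fin (n+1), (j : ℕ) ≠ 0 → v j = 0 := by
  constructor
  · intro hv j hj
    have h1 : (j : ℕ) - 1 + 1 < n + 1 := by omega
    have h0 : (j : ℕ) - 1 < n + 1 := by omega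
    have := congrFun (LinearMap.mem_ker.mp hv) ⟨(j:ℕ)-1, h0⟩
    rw [Emap_apply] at this
    simp only [dif_pos h1, Pi.zero_apply] at this
    have hj' : (⟨(j:ℕ)-1+1, h1⟩ : Fin (n+1)) = j := by ext; simp; omega
    rw [hj'] at this
    have hc1 : (((((j:ℕ)-1 : ℕ)) : K) + 1) ≠ 0 := by
      have : ((((j:ℕ)-1 : ℕ) : K) + 1) = (((j:ℕ)-1+1 : ℕ) : K) := by push_cast; ring
      rw [this]
      exact Nat.cast_ne_zero.mpr (by omega)
    have hc2 : ((n : K) - (((j:ℕ)-1 : ℕ) : K)) ≠ 0 := by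
      have hlt : (j : ℕ) - 1 ≠ n := by omega
      intro h
      apply hlt
      have := sub_eq_zero.mp h
      exact_mod_cast this.symm
    rcases mul_eq_zero.mp this with h | h
    · exact absurd (mul_eq_zero.mp h) (by push_neg; exact ⟨hc1, hc2⟩)
    · exact h
  · intro hv
    apply LinearMap.mem_ker.mpr
    funext i
    rw [Emap_apply]
    split
    · rename_i h
      rw [hv ⟨(i:ℕ)+1, h⟩ (by simp)]
      simp
    · simp

lemma single_mem_kerE_inf_grade (p : ℕ) (hp : p % 2 = 0) :
    Pi.single (0 : Fin (n+1)) (1:K) ∈ LinearMap.ker (Emap K n) ⊓ grade K n p 0 := by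
  constructor
  · show Pi.single (0 : Fin (n+1)) (1:K) ∈ LinearMap.ker (Emap K n)
    rw [mem_ker_Emap]
    intro j hj
    have : j ≠ 0 := fun h => hj (by rw [h]; rfl)
    simp [Pi.single_apply, this]
  · intro i hi
    by_cases h : (i : ℕ) = 0
    · exact absurd hi (by simp [h, hp])
    · have : i ≠ 0 := fun h' => h (by rw [h']; rfl)
      simp [Pi.single_apply, this]

lemma kerE_inf_grade_even (p : ℕ) (hp : p % 2 = 0) :
    LinearMap.ker (Emap K n) ⊓ grade K n p 0 = K ∙ Pi.single (0 : Fin (n+1)) (1:K) := by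
  apply le_antisymm
  · rintro v ⟨hk, hg⟩
    rw [Submodule.mem_span_singleton]
    refine ⟨v 0, funext fun i => ?_⟩
    by_cases hi : (i : ℕ) = 0
    · have : i = 0 := Fin.ext hi
      subst this
      simp
    · rw [(mem_ker_Emap K n).mp hk i hi]
      have hne : i ≠ 0 := fun h => hi (by rw [h]; rfl)
      simp [Pi.single_apply, hne]
  · rw [Submodule.span_singleton_le_iff_mem]
    exact single_mem_kerE_inf_grade K n p hp

lemma kerE_inf_grade_odd (p : ℕ) (hp : p % 2 = 1) :
    LinearMap.ker (Emap K n) ⊓ grade K n p 0 = ⊥ := by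
  rw [eq_bot_iff]
  rintro v ⟨hk, hg⟩
  simp only [Submodule.mem_bot]
  funext i
  by_cases hi : (i : ℕ) = 0
  · exact hg i (by omega)
  · exact (mem_ker_Emap K n).mp hk i hi

noncomputable def gradeEquiv (p q : ℕ) :
    grade K n p q ≃ₗ[K] ({i : Fin (n+1) // (p + (i : ℕ)) % 2 = q % 2} → K) where
  toFun v s := v.1 s.1
  map_add' a b := rfl
  map_smul' c a := rfl
  invFun w := ⟨fun i => if h : (p + (i:ℕ)) % 2 = q % 2 then w ⟨i, h⟩ else 0, by
    intro i hi
    simp [dif_neg hi]⟩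
  left_inv v := by
    apply Subtype.ext
    funext i
    by_cases h : (p + (i:ℕ)) % 2 = q % 2
    · simp [dif_pos h]
    · simp [dif_neg h, (v.2 i h).symm]
  right_inv w := by
    funext s
    simp [dif_pos s.2]

lemma finrank_grade (p q : ℕ) : Module.finrank K (grade K n p q)
    = ((Finset.range (n+1)).filter (fun i => (p + i) % 2 = q % 2)).card := by
  rw [LinearEquiv.finrank_eq (gradeEquiv K n p q), Module.finrank_fintype_fun_eq_card,
    Fintype.card_subtype]
  rw [Finset.card_filter, Finset.card_filter]
  exact Fin.sum_univ_eq_sum_range (fun i => if (p + i) % 2 = q % 2 then 1 else 0) (n+1)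

lemma count_lemma (p q : ℕ) : ∀ m : ℕ, ((Finset.range m).filter (fun i => (p + i) % 2 = q % 2)).card
    = (m + (if (p + q) % 2 = 0 then 1 else 0)) / 2 := by
  intro m
  induction m with
  | zero => simp; split_ifs <;> omega
  | succ m ih =>
    rw [Finset.range_add_one, Finset.filter_insert]
    by_cases h : (p + m) % 2 = q % 2
    · rw [if_pos h, Finset.card_insert_of_notMem (by simp), ih]
      split_ifs <;> omega
    · rw [if_neg h, ih]
      split_ifs <;> omega

end Sl2GradedModel

open Sl2GradedModel

/-- The defect of the irreducible graded representation `V_λ^w` of `sl₂` (highest weight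
`λ = n`, highest weight vector of parity `p`, `w = (−1)^p`) is
`def(V_λ^w) = ½ (λw + w(1+(−1)^λ)/2 − 1)`. -/
theorem defect_irreducible {K : Type*} [Field K] [CharZero K] (n p : ℕ)
    (hres : ∀ x ∈ LinearMap.ker (Emap K n) ⊓ grade K n p 0,
      Hmap K n x ∈ LinearMap.ker (Emap K n) ⊓ grade K n p 0) :
    LinearMap.trace K _ ((Hmap K n).restrict hres)
        - (Module.finrank K (grade K n p 1) : K)
      = (1 / 2) * ((n : K) * (-1 : K) ^ p
          + (-1 : K) ^ p * (1 + (-1 : K) ^ n) / 2 - 1) := by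
  have hfr1 : (Module.finrank K (grade K n p 1) : K)
      = (((n + 1 + (if (p + 1) % 2 = 0 then 1 else 0)) / 2 : ℕ) : K) := by
    rw [finrank_grade, count_lemma]
  by_cases hp : p % 2 = 0
  · -- p even
    obtain ⟨k, hk⟩ : ∃ k, p = 2 * k := ⟨p / 2, by omega⟩
    have hpow : (-1 : K) ^ p = 1 := by
      rw [hk, pow_mul, neg_one_sq, one_pow]
    have hrest : (Hmap K n).restrict hres = (n : K) • LinearMap.id := by
      refine LinearMap.ext fun x => Subtype.ext ?_
      rw [LinearMap.restrict_apply]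
      simp only [LinearMap.smul_apply, LinearMap.id_apply, SetLike.val_smul]
      funext i
      rw [Hmap_apply, Pi.smul_apply, smul_eq_mul]
      by_cases hi : (i : ℕ) = 0
      · simp [hi]
      · rw [(mem_ker_Emap K n).mp x.2.1 i hi, mul_zero, mul_zero]
    rw [hrest, map_smul, LinearMap.trace_id, smul_eq_mul]
    have hW : LinearMap.ker (Emap K n) ⊓ grade K n p 0
        = K ∙ Pi.single (0 : Fin (n+1)) (1:K) := kerE_inf_grade_even K n p hp
    have hone : Module.finrank K ↥(LinearMap.ker (Emap K n) ⊓ grade K n p 0) = 1 := by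
      rw [hW]
      exact finrank_span_singleton (fun h => by
        have := congrFun h 0
        simp at this)
    rw [hone, hfr1, hpow]
    have hcond : ¬ ((p + 1) % 2 = 0) := by omega
    rw [if_neg hcond]
    rcases Nat.even_or_odd n with ⟨m, hm⟩ | ⟨m, hm⟩
    · have hn2 : (-1 : K) ^ n = 1 := by
        rw [hm, (by ring : m + m = 2 * m), pow_mul, neg_one_sq, one_pow]
      have hdiv : (n + 1 + 0) / 2 = m := by omega
      rw [hn2, hdiv, hm]
      push_cast
      ring
    · have hn2 : (-1 : K) ^ n = -1 := by
        rw [hm, pow_add, pow_mul, neg_one_sq, one_pow, pow_one, one_mul]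
      have hdiv : (n + 1 + 0) / 2 = m + 1 := by omega
      rw [hn2, hdiv, hm]
      push_cast
      ring
  · -- p odd
    have hp1 : p % 2 = 1 := by omega
    obtain ⟨k, hk⟩ : ∃ k, p = 2 * k + 1 := ⟨p / 2, by omega⟩
    have hpow : (-1 : K) ^ p = -1 := by
      rw [hk, pow_add, pow_mul, neg_one_sq, one_pow, pow_one, one_mul]
    have hW : LinearMap.ker (Emap K n) ⊓ grade K n p 0 = ⊥ := kerE_inf_grade_odd K n p hp1
    haveI hsub : Subsingleton ↥(LinearMap.ker (Emap K n) ⊓ grade K n p 0) := by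
      rw [hW]; infer_instance
    have hzero : (Hmap K n).restrict hres = 0 := LinearMap.ext fun x => Subsingleton.elim _ _
    rw [hzero, map_zero, hfr1, hpow]
    have hcond : (p + 1) % 2 = 0 := by omega
    rw [if_pos hcond]
    rcases Nat.even_or_odd n with ⟨m, hm⟩ | ⟨m, hm⟩
    · have hn2 : (-1 : K) ^ n = 1 := by
        rw [hm, (by ring : m + m = 2 * m), pow_mul, neg_one_sq, one_pow]
      have hdiv : (n + 1 + 1) / 2 = m + 1 := by omega
      rw [hn2, hdiv, hm]
      push_cast
      ring
    · have hn2 : (-1 : K) ^ n = -1 := by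
        rw [hm, pow_add, pow_mul, neg_one_sq, one_pow, pow_one, one_mul]
      have hdiv : (n + 1 + 1) / 2 = m + 1 := by omega
      rw [hn2, hdiv, hm]
      push_cast
      ring
end

section
/- Every irreducible (ungraded) representation V of sl₂(F) admits exactly two Z/2Z-gradings making it a graded representation of the graded Lie algebra sl₂ (h of degree 0, e and f of degree 1): in one the highest weight vector lies in V₀ and in the other it lies in V₁. -/
open LinearMap Module

section

variable {K V : Type*} [Field K] [AddCommGroup V] [Module K V]

/-- A `ℤ/2ℤ`-grading of a representation of `sl₂` (given by operators `E, H, F`)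
compatible with the grading of `sl₂` in which `h` has degree `0` and `e, f` degree `1`:
a decomposition `V = V₀ ⊕ V₁` preserved by `H` and swapped by `E` and `F`. -/
def IsSl2Grading (E H F : V →ₗ[K] V) (g : Submodule K V × Submodule K V) : Prop :=
  IsCompl g.1 g.2 ∧
    (∀ x ∈ g.1, H x ∈ g.1) ∧ (∀ x ∈ g.2, H x ∈ g.2) ∧
    (∀ x ∈ g.1, E x ∈ g.2) ∧ (∀ x ∈ g.2, E x ∈ g.1) ∧
    (∀ x ∈ g.1, F x ∈ g.2) ∧ (∀ x ∈ g.2, F x ∈ g.1)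

end

/-!
Starting from `v`, the relation `E F^(k+1) x = (k+1) F^k (H - k) x` for `x ∈ ker E`, together with
the nilpotency of `F`, produces a highest weight vector `w` of some weight `n ∈ ℕ`. The string
`w, F w, …, F^n w` consists of `H`-eigenvectors of distinct weights `n - 2k` and spans `V`, so
`ker E = K ∙ w` and `v` is a multiple of `w`. Splitting the string by the parity of `k` gives a
grading with `v` in degree `0`; its swap puts `v` in degree `1`. Conversely, `v` is homogeneous in
every grading, since `ker E` is graded and one-dimensional, and two gradings in which `v` has the
same degree agree: the sum of the pairwise intersections of their homogeneous parts is a nonzero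
subrepresentation, hence everything.
-/

theorem Disjoint.le_of_inf_sup_inf_eq_top {α : Type*} [Lattice α] [BoundedOrder α]
    [IsModularLattice α] {a b a' b' : α} (h : Disjoint a b) (htop : a ⊓ a' ⊔ b ⊓ b' = ⊤) :
    a ≤ a' :=
  calc a = (a ⊓ a' ⊔ b ⊓ b') ⊓ a := by rw [htop, top_inf_eq]
    _ = a ⊓ a' ⊔ b ⊓ b' ⊓ a := sup_inf_assoc_of_le _ inf_le_left
    _ = a ⊓ a' := by rw [(h.symm.mono_left inf_le_left).eq_bot, sup_bot_eq]
    _ ≤ a' := inf_le_right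

theorem eq_and_eq_of_inf_sup_inf_eq_top {α : Type*} [Lattice α] [BoundedOrder α]
    [IsModularLattice α] {a b a' b' : α} (h : Disjoint a b) (h' : Disjoint a' b')
    (htop : a ⊓ a' ⊔ b ⊓ b' = ⊤) : a = a' ∧ b = b' := by
  have htop' : a' ⊓ a ⊔ b' ⊓ b = ⊤ := by rwa [inf_comm a', inf_comm b']
  exact ⟨(h.le_of_inf_sup_inf_eq_top htop).antisymm (h'.le_of_inf_sup_inf_eq_top htop'),
    (h.symm.le_of_inf_sup_inf_eq_top (by rwa [sup_comm])).antisymm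
      (h'.symm.le_of_inf_sup_inf_eq_top (by rwa [sup_comm]))⟩

theorem sub_two_mul_natCast_injective {K : Type*} [Field K] [CharZero K] (a : K) :
    Function.Injective fun k : ℕ => a - 2 * k := fun k l h => by simpa using h

theorem natCast_add_one_mul_sub_ne_zero {K : Type*} [Field K] [CharZero K] {k n : ℕ}
    (h : k < n) : ((k : K) + 1) * ((n : K) - k) ≠ 0 :=
  mul_ne_zero (Nat.cast_add_one_ne_zero k) (sub_ne_zero.2 (Nat.cast_injective.ne h.ne'))

section

variable {K V : Type*} [Field K] [AddCommGroup V] [Module K V]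

theorem Submodule.forall_mem_span_image_apply_mem {ι : Type*} {f : ι → V} {s : Set ι}
    {T : V →ₗ[K] V} {W : Submodule K V} (h : ∀ k ∈ s, T (f k) ∈ W) :
    ∀ x ∈ Submodule.span K (f '' s), T x ∈ W :=
  fun _ hx => (Submodule.span_le (p := W.comap T)).2 (Set.image_subset_iff.2 h) hx

structure IsSl2Action (E H F : V →ₗ[K] V) : Prop where
  lie_H_E : H ∘ₗ E - E ∘ₗ H = (2 : K) • E
  lie_H_F : H ∘ₗ F - F ∘ₗ H = (-2 : K) • F
  lie_E_F : E ∘ₗ F - F ∘ₗ E = H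

def IsSl2Irreducible (E H F : V →ₗ[K] V) : Prop :=
  ∀ W : Submodule K V, (∀ x ∈ W, E x ∈ W) → (∀ x ∈ W, H x ∈ W) → (∀ x ∈ W, F x ∈ W) →
    W = ⊥ ∨ W = ⊤

-- The last field follows from the others in finite dimension; it is included because the
-- construction in `IsSl2Action.exists_isHighestWeightVector` yields it for free.
structure IsHighestWeightVector (E H F : V →ₗ[K] V) (w : V) (n : ℕ) : Prop where
  ne_zero : w ≠ 0
  apply_E : E w = 0
  apply_H : H w = (n : K) • w
  pow_F_succ_apply : (F ^ (n + 1)) w = 0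

structure IsSl2ParityPair (E H F : V →ₗ[K] V) (p q : Submodule K V) : Prop where
  H_fst : ∀ x ∈ p, H x ∈ p
  H_snd : ∀ x ∈ q, H x ∈ q
  E_fst : ∀ x ∈ p, E x ∈ q
  E_snd : ∀ x ∈ q, E x ∈ p
  F_fst : ∀ x ∈ p, F x ∈ q
  F_snd : ∀ x ∈ q, F x ∈ p

def parityGrading (F : V →ₗ[K] V) (w : V) : Submodule K V × Submodule K V :=
  (Submodule.span K ((fun k => (F ^ k) w) '' {k | Even k}),
    Submodule.span K ((fun k => (F ^ k) w) '' {k | Odd k}))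

variable {E H F : V →ₗ[K] V}

namespace IsSl2Action

theorem apply_H_E (ρ : IsSl2Action E H F) (x : V) : H (E x) = E (H x) + (2 : K) • E x := by
  have := LinearMap.congr_fun ρ.lie_H_E x
  simp only [LinearMap.sub_apply, comp_apply, LinearMap.smul_apply] at this
  linear_combination (norm := module) this

theorem apply_H_F (ρ : IsSl2Action E H F) (x : V) : H (F x) = F (H x) - (2 : K) • F x := by
  have := LinearMap.congr_fun ρ.lie_H_F x
  simp only [LinearMap.sub_apply, comp_apply, LinearMap.smul_apply] at this
  linear_combination (norm := module) this

theorem apply_E_F (ρ : IsSl2Action E H F) (x : V) : E (F x) = F (E x) + H x := by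
  have := LinearMap.congr_fun ρ.lie_E_F x
  simp only [LinearMap.sub_apply, comp_apply] at this
  linear_combination (norm := module) this

theorem apply_E_apply_H_of_apply_E_eq_zero (ρ : IsSl2Action E H F) {x : V} (hx : E x = 0) :
    E (H x) = 0 := by
  simpa [hx] using (ρ.apply_H_E x).symm

theorem apply_H_pow_F (ρ : IsSl2Action E H F) (k : ℕ) (x : V) :
    H ((F ^ k) x) = (F ^ k) (H x) - (2 * k : K) • (F ^ k) x := by
  induction k with
  | zero => simp
  | succ k ih =>
    simp only [pow_succ', Module.End.mul_apply, ρ.apply_H_F, ih, map_sub, map_smul]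
    push_cast
    module

theorem apply_E_pow_F_succ (ρ : IsSl2Action E H F) (k : ℕ) {x : V} (hx : E x = 0) :
    E ((F ^ (k + 1)) x) = (k + 1 : K) • (F ^ k) (H x - (k : K) • x) := by
  induction k with
  | zero => simp [ρ.apply_E_F, hx]
  | succ k ih =>
    rw [pow_succ' F (k + 1), Module.End.mul_apply, ρ.apply_E_F, ih, ρ.apply_H_pow_F]
    simp only [pow_succ' F k, Module.End.mul_apply, map_sub, map_smul]
    push_cast
    module

theorem exists_pow_F_eq_zero [CharZero K] [FiniteDimensional K V] (ρ : IsSl2Action E H F) :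
    ∃ m, F ^ m = 0 := by
  -- otherwise the `F ^ k` are infinitely many eigenvectors of `X ↦ X * H - H * X`, with the
  -- distinct eigenvalues `2 * k`
  by_contra! h
  have hF : ∀ k : ℕ, F ^ k * H - H * F ^ k = (2 * k : K) • F ^ k := fun k => by
    ext x
    simp [ρ.apply_H_pow_F]
  refine Module.Finite.not_linearIndependent_of_infinite (fun k : ℕ => F ^ k)
    (Module.End.eigenvectors_linearIndependent' (LinearMap.mulRight K H - LinearMap.mulLeft K H)
      (fun k : ℕ => (2 * k : K)) ((mul_right_injective₀ two_ne_zero).comp Nat.cast_injective)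
      _ fun k => ⟨Module.End.mem_eigenspace_iff.2 ?_, h k⟩)
  simpa using hF k

theorem exists_isHighestWeightVector [CharZero K] (ρ : IsSl2Action E H F) (m : ℕ) {x : V}
    (hx : x ≠ 0) (hEx : E x = 0) (hFx : (F ^ m) x = 0) :
    ∃ w n, IsHighestWeightVector E H F w n := by
  induction m generalizing x with
  | zero => exact absurd hFx hx
  | succ m ih =>
    set y := H x - (m : K) • x
    have hEy : E y = 0 := by simp [y, ρ.apply_E_apply_H_of_apply_E_eq_zero hEx, hEx]
    have hFy : (F ^ m) y = 0 := by
      have := ρ.apply_E_pow_F_succ m hEx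
      rwa [hFx, map_zero, eq_comm, smul_eq_zero, or_iff_right (Nat.cast_add_one_ne_zero m)] at this
    by_cases hy : y = 0
    · exact ⟨x, m, hx, hEx, sub_eq_zero.1 hy, hFx⟩
    · exact ih hy hEy hFy

end IsSl2Action

namespace IsHighestWeightVector

variable {w : V} {n : ℕ}

theorem smul (hw : IsHighestWeightVector E H F w n) {c : K} (hc : c ≠ 0) :
    IsHighestWeightVector E H F (c • w) n :=
  ⟨smul_ne_zero hc hw.ne_zero, by rw [map_smul, hw.apply_E, smul_zero],
    by rw [map_smul, hw.apply_H, smul_comm], by rw [map_smul, hw.pow_F_succ_apply, smul_zero]⟩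

theorem apply_H_pow_F (hw : IsHighestWeightVector E H F w n) (ρ : IsSl2Action E H F) (k : ℕ) :
    H ((F ^ k) w) = ((n : K) - 2 * k) • (F ^ k) w := by
  rw [ρ.apply_H_pow_F, hw.apply_H, map_smul, sub_smul]

theorem apply_E_pow_F_succ (hw : IsHighestWeightVector E H F w n) (ρ : IsSl2Action E H F)
    (k : ℕ) : E ((F ^ (k + 1)) w) = (((k : K) + 1) * ((n : K) - k)) • (F ^ k) w := by
  rw [ρ.apply_E_pow_F_succ k hw.apply_E, hw.apply_H, ← sub_smul, map_smul, smul_smul]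

theorem pow_F_apply_eq_zero (hw : IsHighestWeightVector E H F w n) {k : ℕ} (hk : n < k) :
    (F ^ k) w = 0 := by
  obtain ⟨j, rfl⟩ : ∃ j, k = j + (n + 1) := ⟨k - (n + 1), by omega⟩
  rw [pow_add, Module.End.mul_apply, hw.pow_F_succ_apply, map_zero]

theorem pow_F_apply_ne_zero [CharZero K] (hw : IsHighestWeightVector E H F w n)
    (ρ : IsSl2Action E H F) {k : ℕ} (hk : k ≤ n) : (F ^ k) w ≠ 0 := by
  induction k with
  | zero => simpa using hw.ne_zero
  | succ k ih =>
    intro h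
    have := hw.apply_E_pow_F_succ ρ k
    rw [h, map_zero, eq_comm, smul_eq_zero] at this
    exact ih (by omega) (this.resolve_left (natCast_add_one_mul_sub_ne_zero (by omega)))

theorem linearIndependent_pow_F [CharZero K] (hw : IsHighestWeightVector E H F w n)
    (ρ : IsSl2Action E H F) : LinearIndependent K fun i : Fin (n + 1) => (F ^ (i : ℕ)) w :=
  Module.End.eigenvectors_linearIndependent' H _
    ((sub_two_mul_natCast_injective _).comp Fin.val_injective) _ fun i =>
      ⟨Module.End.mem_eigenspace_iff.2 (hw.apply_H_pow_F ρ i), hw.pow_F_apply_ne_zero ρ i.is_le⟩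

end IsHighestWeightVector

namespace IsSl2ParityPair

variable {p q p' q' : Submodule K V}

theorem symm (h : IsSl2ParityPair E H F p q) : IsSl2ParityPair E H F q p :=
  ⟨h.H_snd, h.H_fst, h.E_snd, h.E_fst, h.F_snd, h.F_fst⟩

theorem inf (h : IsSl2ParityPair E H F p q) (h' : IsSl2ParityPair E H F p' q') :
    IsSl2ParityPair E H F (p ⊓ p') (q ⊓ q') :=
  ⟨fun x hx => ⟨h.H_fst x hx.1, h'.H_fst x hx.2⟩, fun x hx => ⟨h.H_snd x hx.1, h'.H_snd x hx.2⟩,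
    fun x hx => ⟨h.E_fst x hx.1, h'.E_fst x hx.2⟩, fun x hx => ⟨h.E_snd x hx.1, h'.E_snd x hx.2⟩,
    fun x hx => ⟨h.F_fst x hx.1, h'.F_fst x hx.2⟩, fun x hx => ⟨h.F_snd x hx.1, h'.F_snd x hx.2⟩⟩

theorem sup_eq_top (h : IsSl2ParityPair E H F p q) (hirr : IsSl2Irreducible E H F)
    (hne : p ⊔ q ≠ ⊥) : p ⊔ q = ⊤ := by
  have hsup : ∀ T : V →ₗ[K] V, (∀ x ∈ p, T x ∈ p ⊔ q) → (∀ x ∈ q, T x ∈ p ⊔ q) →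
      ∀ x ∈ p ⊔ q, T x ∈ p ⊔ q := fun T hp hq x hx =>
    sup_le (show p ≤ (p ⊔ q).comap T from hp) hq hx
  refine (hirr _ ?_ ?_ ?_).resolve_left hne
  · exact hsup E (fun x hx => Submodule.mem_sup_right (h.E_fst x hx))
      (fun x hx => Submodule.mem_sup_left (h.E_snd x hx))
  · exact hsup H (fun x hx => Submodule.mem_sup_left (h.H_fst x hx))
      (fun x hx => Submodule.mem_sup_right (h.H_snd x hx))
  · exact hsup F (fun x hx => Submodule.mem_sup_right (h.F_fst x hx))
      (fun x hx => Submodule.mem_sup_left (h.F_snd x hx))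

end IsSl2ParityPair

theorem isSl2Grading_iff {g : Submodule K V × Submodule K V} :
    IsSl2Grading E H F g ↔ IsCompl g.1 g.2 ∧ IsSl2ParityPair E H F g.1 g.2 :=
  ⟨fun ⟨h, a, b, c, d, e, f⟩ => ⟨h, a, b, c, d, e, f⟩,
    fun ⟨h, a, b, c, d, e, f⟩ => ⟨h, a, b, c, d, e, f⟩⟩

namespace IsSl2Grading

variable {g g' : Submodule K V × Submodule K V}

theorem isCompl (hg : IsSl2Grading E H F g) : IsCompl g.1 g.2 := hg.1

theorem isSl2ParityPair (hg : IsSl2Grading E H F g) : IsSl2ParityPair E H F g.1 g.2 :=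
  (isSl2Grading_iff.1 hg).2

theorem swap (hg : IsSl2Grading E H F g) : IsSl2Grading E H F g.swap :=
  isSl2Grading_iff.2 ⟨hg.isCompl.symm, hg.isSl2ParityPair.symm⟩

theorem eq_of_mem_fst (hg : IsSl2Grading E H F g) (hg' : IsSl2Grading E H F g')
    (hirr : IsSl2Irreducible E H F) {v : V} (hv : v ≠ 0) (h : v ∈ g.1) (h' : v ∈ g'.1) :
    g = g' := by
  have hne : g.1 ⊓ g'.1 ⊔ g.2 ⊓ g'.2 ≠ ⊥ :=
    Submodule.ne_bot_iff _ |>.2 ⟨v, Submodule.mem_sup_left ⟨h, h'⟩, hv⟩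
  obtain ⟨h1, h2⟩ := eq_and_eq_of_inf_sup_inf_eq_top hg.isCompl.disjoint hg'.isCompl.disjoint
    ((hg.isSl2ParityPair.inf hg'.isSl2ParityPair).sup_eq_top hirr hne)
  exact Prod.ext h1 h2

theorem mem_fst_or_mem_snd (hg : IsSl2Grading E H F g) {v : V} (hker : ker E ≤ K ∙ v)
    (hEv : E v = 0) : v ∈ g.1 ∨ v ∈ g.2 := by
  obtain ⟨x₀, hx₀, x₁, hx₁, hsum⟩ :=
    Submodule.mem_sup.1 (hg.isCompl.codisjoint.eq_top ▸ Submodule.mem_top : v ∈ g.1 ⊔ g.2)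
  have hEx₀ : E x₀ = 0 := by
    have hE : E x₀ = -E x₁ := by rw [eq_neg_iff_add_eq_zero, ← map_add, hsum, hEv]
    refine Submodule.disjoint_def.1 hg.isCompl.disjoint _ ?_ (hg.isSl2ParityPair.E_fst _ hx₀)
    exact hE ▸ neg_mem (hg.isSl2ParityPair.E_snd _ hx₁)
  obtain ⟨a, rfl⟩ := Submodule.mem_span_singleton.1 (hker hEx₀)
  by_cases ha : a = 0
  · rw [ha, zero_smul, zero_add] at hsum
    exact Or.inr (hsum ▸ hx₁)
  · exact Or.inl ((g.1.smul_mem_iff ha).1 hx₀)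

end IsSl2Grading

theorem pow_F_apply_mem_parityGrading_fst {w : V} {k : ℕ} (hk : Even k) :
    (F ^ k) w ∈ (parityGrading F w).1 :=
  Submodule.subset_span ⟨k, hk, rfl⟩

theorem pow_F_apply_mem_parityGrading_snd {w : V} {k : ℕ} (hk : Odd k) :
    (F ^ k) w ∈ (parityGrading F w).2 :=
  Submodule.subset_span ⟨k, hk, rfl⟩

theorem self_mem_parityGrading_fst (w : V) : w ∈ (parityGrading F w).1 := by
  simpa using pow_F_apply_mem_parityGrading_fst (F := F) (w := w) Even.zero

namespace IsHighestWeightVector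

variable {w : V} {n : ℕ}

theorem isSl2ParityPair_parityGrading (hw : IsHighestWeightVector E H F w n)
    (ρ : IsSl2Action E H F) :
    IsSl2ParityPair E H F (parityGrading F w).1 (parityGrading F w).2 := by
  have hF : ∀ k, F ((F ^ k) w) = (F ^ (k + 1)) w := fun k => by
    rw [pow_succ', Module.End.mul_apply]
  refine ⟨Submodule.forall_mem_span_image_apply_mem fun k hk => ?_,
    Submodule.forall_mem_span_image_apply_mem fun k hk => ?_,
    Submodule.forall_mem_span_image_apply_mem fun k hk => ?_,
    Submodule.forall_mem_span_image_apply_mem fun k hk => ?_,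
    Submodule.forall_mem_span_image_apply_mem fun k hk => ?_,
    Submodule.forall_mem_span_image_apply_mem fun k hk => ?_⟩
  · rw [hw.apply_H_pow_F ρ]
    exact Submodule.smul_mem _ _ (pow_F_apply_mem_parityGrading_fst hk)
  · rw [hw.apply_H_pow_F ρ]
    exact Submodule.smul_mem _ _ (pow_F_apply_mem_parityGrading_snd hk)
  · rcases k with _ | k
    · simp [hw.apply_E]
    · rw [hw.apply_E_pow_F_succ ρ]
      exact Submodule.smul_mem _ _
        (pow_F_apply_mem_parityGrading_snd (Nat.even_add_one.1 hk |> Nat.not_even_iff_odd.1))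
  · rcases k with _ | k
    · exact absurd hk Nat.not_odd_zero
    · rw [hw.apply_E_pow_F_succ ρ]
      exact Submodule.smul_mem _ _
        (pow_F_apply_mem_parityGrading_fst (Nat.odd_add_one.1 hk |> Nat.not_odd_iff_even.1))
  · exact hF k ▸ pow_F_apply_mem_parityGrading_snd (Even.add_one hk)
  · exact hF k ▸ pow_F_apply_mem_parityGrading_fst (Odd.add_one hk)

theorem disjoint_parityGrading [CharZero K] (hw : IsHighestWeightVector E H F w n)
    (ρ : IsSl2Action E H F) : Disjoint (parityGrading F w).1 (parityGrading F w).2 := by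
  let weightSpace (k : ℕ) := Module.End.eigenspace H ((n : K) - 2 * k)
  have hle : ∀ s : Set ℕ,
      Submodule.span K ((fun k => (F ^ k) w) '' s) ≤ ⨆ k ∈ s, weightSpace k :=
    fun s => Submodule.span_le.2 <| Set.image_subset_iff.2 fun k hk =>
      (le_iSup₂ (f := fun k (_ : k ∈ s) => weightSpace k) k hk)
        (Module.End.mem_eigenspace_iff.2 (hw.apply_H_pow_F ρ k))
  have hind : iSupIndep weightSpace :=
    (Module.End.eigenspaces_iSupIndep H).comp (sub_two_mul_natCast_injective _)
  exact (hind.disjoint_biSup_biSup (Set.disjoint_left.2 fun k he ho =>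
    Nat.not_even_iff_odd.2 ho he)).mono (hle _) (hle _)

theorem isSl2Grading_parityGrading [CharZero K] (hw : IsHighestWeightVector E H F w n)
    (ρ : IsSl2Action E H F) (hirr : IsSl2Irreducible E H F) :
    IsSl2Grading E H F (parityGrading F w) := by
  have hpair := hw.isSl2ParityPair_parityGrading ρ
  have hne : (parityGrading F w).1 ⊔ (parityGrading F w).2 ≠ ⊥ :=
    Submodule.ne_bot_iff _ |>.2 ⟨w, Submodule.mem_sup_left (self_mem_parityGrading_fst w),
      hw.ne_zero⟩
  exact isSl2Grading_iff.2
    ⟨⟨hw.disjoint_parityGrading ρ, codisjoint_iff.2 (hpair.sup_eq_top hirr hne)⟩, hpair⟩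

theorem span_pow_F_eq_top [CharZero K] (hw : IsHighestWeightVector E H F w n)
    (ρ : IsSl2Action E H F) (hirr : IsSl2Irreducible E H F) :
    Submodule.span K (Set.range fun i : Fin (n + 1) => (F ^ (i : ℕ)) w) = ⊤ := by
  have hmem : ∀ k,
      (F ^ k) w ∈ Submodule.span K (Set.range fun i : Fin (n + 1) => (F ^ (i : ℕ)) w) :=
    fun k => if hk : k ≤ n then Submodule.subset_span ⟨⟨k, by omega⟩, rfl⟩
      else hw.pow_F_apply_eq_zero (not_le.1 hk) ▸ Submodule.zero_mem _
  rw [eq_top_iff, ← (hw.isSl2Grading_parityGrading ρ hirr).isCompl.codisjoint.eq_top]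
  exact sup_le (Submodule.span_le.2 (Set.image_subset_iff.2 fun k _ => hmem k))
    (Submodule.span_le.2 (Set.image_subset_iff.2 fun k _ => hmem k))

theorem ker_E_le_span_singleton [CharZero K] (hw : IsHighestWeightVector E H F w n)
    (ρ : IsSl2Action E H F) (hirr : IsSl2Irreducible E H F) : ker E ≤ K ∙ w := by
  intro x hx
  obtain ⟨c, rfl⟩ := (Submodule.mem_span_range_iff_exists_fun K).1
    (hw.span_pow_F_eq_top ρ hirr ▸ Submodule.mem_top : x ∈ _)
  have hc : ∀ i : Fin n, c i.succ = 0 := by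
    have hsum : ∑ i : Fin n, (c i.succ * (((i : ℕ) + 1) * ((n : K) - (i : ℕ)))) •
        (F ^ (i : ℕ)) w = 0 := by
      simpa [Fin.sum_univ_succ, hw.apply_E, hw.apply_E_pow_F_succ ρ, smul_smul] using hx
    intro i
    have := Fintype.linearIndependent_iff.1
      ((hw.linearIndependent_pow_F ρ).comp _ (Fin.castSucc_injective n)) _ hsum i
    exact (mul_eq_zero.1 this).resolve_right (natCast_add_one_mul_sub_ne_zero i.is_lt)
  simpa [Fin.sum_univ_succ, hc] using
    Submodule.smul_mem _ (c 0) (Submodule.mem_span_singleton_self w)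

end IsHighestWeightVector
end

theorem two_gradings_general {K V : Type*} [Field K] [CharZero K] [AddCommGroup V] [Module K V]
    [FiniteDimensional K V]
    (E H F : V →ₗ[K] V)
    (hhe : H ∘ₗ E - E ∘ₗ H = (2 : K) • E)
    (hhf : H ∘ₗ F - F ∘ₗ H = (-2 : K) • F)
    (hef : E ∘ₗ F - F ∘ₗ E = H)
    (hirr : ∀ W : Submodule K V, (∀ x ∈ W, E x ∈ W) → (∀ x ∈ W, H x ∈ W) →
      (∀ x ∈ W, F x ∈ W) → W = ⊥ ∨ W = ⊤)
    (v : V) (hv : v ≠ 0) (hEv : E v = 0) :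
    ∃ g₁ g₂ : Submodule K V × Submodule K V,
      IsSl2Grading E H F g₁ ∧ IsSl2Grading E H F g₂ ∧ g₁ ≠ g₂ ∧
      v ∈ g₁.1 ∧ v ∈ g₂.2 ∧
      ∀ g, IsSl2Grading E H F g → g = g₁ ∨ g = g₂ := by
  have ρ : IsSl2Action E H F := ⟨hhe, hhf, hef⟩
  obtain ⟨m, hm⟩ := ρ.exists_pow_F_eq_zero
  obtain ⟨w, n, hw⟩ := ρ.exists_isHighestWeightVector m hv hEv (by rw [hm]; rfl)
  obtain ⟨c, rfl⟩ := Submodule.mem_span_singleton.1 (hw.ker_E_le_span_singleton ρ hirr hEv)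
  have hv' := hw.smul (left_ne_zero_of_smul hv)
  have hg := hv'.isSl2Grading_parityGrading ρ hirr
  have hvg := self_mem_parityGrading_fst (F := F) (c • w)
  have hker := hv'.ker_E_le_span_singleton ρ hirr
  refine ⟨_, _, hg, hg.swap, fun h => hv ?_, hvg, hvg, fun g hg' => ?_⟩
  · exact Submodule.disjoint_def.1 hg.isCompl.disjoint _ hvg ((congrArg Prod.fst h).le hvg)
  rcases hg'.mem_fst_or_mem_snd hker hEv with h | h
  · exact Or.inl (hg'.eq_of_mem_fst hg hirr hv h hvg)
  · exact Or.inr (congrArg Prod.swap (hg'.swap.eq_of_mem_fst hg hirr hv h hvg))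

/-- Every irreducible representation `V` of `sl₂` admits exactly two `ℤ/2ℤ`-gradings
making it a graded representation: in one the highest weight vector lies in `V₀`
and in the other it lies in `V₁`. -/
theorem two_gradings {K V : Type*} [Field K] [CharZero K] [AddCommGroup V] [Module K V]
    [FiniteDimensional K V] [Nontrivial V]
    (E H F : V →ₗ[K] V)
    (hhe : H ∘ₗ E - E ∘ₗ H = (2 : K) • E)
    (hhf : H ∘ₗ F - F ∘ₗ H = (-2 : K) • F)
    (hef : E ∘ₗ F - F ∘ₗ E = H)
    (hirr : ∀ W : Submodule K V, (∀ x ∈ W, E x ∈ W) → (∀ x ∈ W, H x ∈ W) →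
      (∀ x ∈ W, F x ∈ W) → W = ⊥ ∨ W = ⊤)
    (v : V) (hv : v ≠ 0) (hEv : E v = 0) :
    ∃ g₁ g₂ : Submodule K V × Submodule K V,
      IsSl2Grading E H F g₁ ∧ IsSl2Grading E H F g₂ ∧ g₁ ≠ g₂ ∧
      v ∈ g₁.1 ∧ v ∈ g₂.2 ∧
      ∀ g, IsSl2Grading E H F g → g = g₁ ∨ g = g₂ :=
  two_gradings_general E H F hhe hhf hef hirr v hv hEv
end

section
/- Every graded representation of sl₂ which is irreducible as a graded representation (i.e. has no nonzero proper graded subrepresentations) is irreducible as an ordinary representation of sl₂. -/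
open LinearMap Module

section AuxLemmas

variable {K V : Type*} [Field K] [AddCommGroup V] [Module K V]

/-- Pointwise commutation of `H` with powers of `F`. -/
private lemma aux_HF_pow (H F : V →ₗ[K] V)
    (hhf : ∀ x : V, H (F x) = F (H x) - (2 : K) • F x) (k : ℕ) (x : V) :
    H ((F ^ k) x) = (F ^ k) (H x) - ((2 : K) * k) • (F ^ k) x := by
  induction k generalizing x with
  | zero => simp
  | succ k ih =>
    have hp : ∀ y : V, (F ^ (k + 1)) y = F ((F ^ k) y) := by
      intro y; rw [pow_succ']; rfl
    simp only [hp]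
    rw [hhf, ih]
    simp only [map_sub, map_smul]
    push_cast
    module

/-- Pointwise action of `E` on the `F`-string of a vector killed by `E`. -/
private lemma aux_EF_pow (E H F : V →ₗ[K] V)
    (hef : ∀ x : V, E (F x) = F (E x) + H x)
    (hhf : ∀ x : V, H (F x) = F (H x) - (2 : K) • F x)
    (v : V) (hv : E v = 0) (k : ℕ) :
    E ((F ^ (k + 1)) v) = ((k : K) + 1) • (F ^ k) (H v - (k : K) • v) := by
  induction k with
  | zero => simp [pow_one, hef v, hv]
  | succ k ih =>
    have hp : (F ^ (k + 1 + 1)) v = F ((F ^ (k + 1)) v) := by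
      rw [pow_succ']; rfl
    have hp2 : ∀ y : V, (F ^ (k + 1)) y = F ((F ^ k) y) := by
      intro y; rw [pow_succ']; rfl
    rw [hp, hef, ih, aux_HF_pow H F hhf (k + 1) v]
    simp only [hp2]
    simp only [map_sub, map_smul]
    push_cast
    module

/-- From a nonzero vector of `W` killed by `E` and by a power of `F`, produce a nonzero
vector of `W` killed by `E` which is an eigenvector of `H`. -/
private lemma aux_exists_eigen [CharZero K] (E H F : V →ₗ[K] V)
    (hef : ∀ x : V, E (F x) = F (E x) + H x)
    (hhf : ∀ x : V, H (F x) = F (H x) - (2 : K) • F x)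
    (hhe : ∀ x : V, E (H x) = H (E x) - (2 : K) • E x)
    (W : Submodule K V) (hWH : ∀ x ∈ W, H x ∈ W) :
    ∀ (m : ℕ) (v : V), v ∈ W → v ≠ 0 → E v = 0 → (F ^ m) v = 0 →
      ∃ (w : V) (μ : K), w ∈ W ∧ w ≠ 0 ∧ E w = 0 ∧ H w = μ • w := by
  intro m
  induction m with
  | zero => intro v _ hne _ h0; exact absurd (by simpa using h0) hne
  | succ m ih =>
    intro v hvW hne hEv hFv
    have hFz : (F ^ m) (H v - (m : K) • v) = 0 := by
      have h1 : E ((F ^ (m + 1)) v) = ((m : K) + 1) • (F ^ m) (H v - (m : K) • v) :=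
        aux_EF_pow E H F hef hhf v hEv m
      rw [hFv, map_zero] at h1
      rcases smul_eq_zero.mp h1.symm with h | h
      · exact absurd h (Nat.cast_add_one_ne_zero m)
      · exact h
    by_cases hzz : H v - (m : K) • v = 0
    · exact ⟨v, (m : K), hvW, hne, hEv, sub_eq_zero.mp hzz⟩
    · refine ih (H v - (m : K) • v) ?_ hzz ?_ hFz
      · exact sub_mem (hWH v hvW) (Submodule.smul_mem _ _ hvW)
      · rw [map_sub, map_smul, hhe, hEv]
        simp

/-- The trace trick: if `A ∘ B - B ∘ A = c • B` with `c ≠ 0` and `B` bijective,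
then the space is zero. -/
private lemma aux_trace_trick {U : Type*} [CharZero K] [AddCommGroup U] [Module K U]
    [FiniteDimensional K U] (A B : U →ₗ[K] U) (c : K) (hc : c ≠ 0)
    (h : A ∘ₗ B - B ∘ₗ A = c • B) (hB : Function.Bijective B) :
    Module.finrank K U = 0 := by
  have hu : IsUnit B := (Module.End.isUnit_iff B).mpr hB
  obtain ⟨u, hu⟩ := hu
  have h2 : A * ↑u - ↑u * A = c • (↑u : U →ₗ[K] U) := by
    rw [hu]; exact h
  have e1 : LinearMap.trace K U ((A * ↑u - ↑u * A) * ↑u⁻¹) = 0 := by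
    rw [sub_mul, mul_assoc, Units.mul_inv, mul_one, map_sub, mul_assoc,
      LinearMap.trace_mul_comm, mul_assoc, Units.inv_mul, mul_one, sub_self]
  have e2 : LinearMap.trace K U ((c • (↑u : U →ₗ[K] U)) * ↑u⁻¹) =
      c * Module.finrank K U := by
    rw [smul_mul_assoc, map_smul, Units.mul_inv, LinearMap.trace_one, smul_eq_mul]
  have h3 : (0 : K) = c * Module.finrank K U := by
    rw [← e1, ← e2, h2]
  have h4 : (Module.finrank K U : K) = 0 := by
    rcases mul_eq_zero.mp h3.symm with h' | h'
    · exact absurd h' hc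
    · exact h'
  exact_mod_cast h4

/-- On a nonzero invariant subspace, `E` has a nonzero kernel vector. -/
private lemma aux_exists_ker [CharZero K] [FiniteDimensional K V] (E H : V →ₗ[K] V)
    (hhe : H ∘ₗ E - E ∘ₗ H = (2 : K) • E)
    (W : Submodule K V) (hWE : ∀ x ∈ W, E x ∈ W) (hWH : ∀ x ∈ W, H x ∈ W)
    (hW : W ≠ ⊥) : ∃ v ∈ W, v ≠ 0 ∧ E v = 0 := by
  set E' : W →ₗ[K] W := E.restrict hWE with hE'
  set H' : W →ₗ[K] W := H.restrict hWH with hH'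
  by_cases hker : LinearMap.ker E' = ⊥
  · exfalso
    have hinj : Function.Injective E' := LinearMap.ker_eq_bot.mp hker
    have hbij : Function.Bijective E' :=
      ⟨hinj, (LinearMap.injective_iff_surjective).mp hinj⟩
    have hrel : H' ∘ₗ E' - E' ∘ₗ H' = (2 : K) • E' := by
      ext x
      have hx := LinearMap.ext_iff.mp hhe (x : V)
      simp only [LinearMap.sub_apply, LinearMap.comp_apply, LinearMap.smul_apply] at hx
      simp only [LinearMap.sub_apply, LinearMap.comp_apply, LinearMap.smul_apply,
        Submodule.coe_sub, SetLike.val_smul, hE', hH', LinearMap.restrict_coe_apply]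
      exact hx
    have h0 := aux_trace_trick H' E' (2 : K) (by norm_num) hrel hbij
    rw [Submodule.finrank_eq_zero] at h0
    exact hW h0
  · obtain ⟨x, hx, hxne⟩ := (Submodule.ne_bot_iff _).mp hker
    refine ⟨(x : V), x.2, ?_, ?_⟩
    · simpa using hxne
    · have hx0 : E' x = 0 := LinearMap.mem_ker.mp hx
      have : (↑(E' x) : V) = 0 := by rw [hx0]; rfl
      rwa [hE', LinearMap.restrict_coe_apply] at this

/-- `F` is nilpotent. -/
private lemma aux_F_nilpotent [CharZero K] [FiniteDimensional K V] (H F : V →ₗ[K] V)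
    (hhf : ∀ x : V, H (F x) = F (H x) - (2 : K) • F x) :
    ∃ n : ℕ, (F ^ n : V →ₗ[K] V) = 0 := by
  have hchain : ∀ k : ℕ, LinearMap.range (F ^ (k + 1)) ≤ LinearMap.range (F ^ k) := by
    intro k
    rw [pow_succ]
    exact LinearMap.range_comp_le_range _ _
  have hstab : ∃ k : ℕ, LinearMap.range (F ^ (k + 1)) = LinearMap.range (F ^ k) := by
    by_contra hcon
    push_neg at hcon
    have hdec : ∀ k, Module.finrank K (LinearMap.range (F ^ (k + 1))) <
        Module.finrank K (LinearMap.range (F ^ k)) := by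
      intro k
      exact Submodule.finrank_lt_finrank_of_lt (lt_of_le_of_ne (hchain k) (hcon k))
    have hle : ∀ n, Module.finrank K (LinearMap.range (F ^ n)) + n ≤
        Module.finrank K (LinearMap.range (F ^ 0)) := by
      intro n
      induction n with
      | zero => omega
      | succ n ihn => have := hdec n; omega
    have := hle (Module.finrank K (LinearMap.range (F ^ 0)) + 1)
    omega
  obtain ⟨k, hk⟩ := hstab
  have hFR : ∀ x ∈ LinearMap.range (F ^ k), F x ∈ LinearMap.range (F ^ k) := by
    rintro x ⟨y, rfl⟩
    have h1 : F ((F ^ k) y) = (F ^ (k + 1)) y := by rw [pow_succ']; rfl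
    rw [h1, ← hk]
    exact LinearMap.mem_range_self _ _
  have hHR : ∀ x ∈ LinearMap.range (F ^ k), H x ∈ LinearMap.range (F ^ k) := by
    rintro x ⟨y, rfl⟩
    rw [aux_HF_pow H F hhf k y]
    exact sub_mem (LinearMap.mem_range_self _ _)
      (Submodule.smul_mem _ _ (LinearMap.mem_range_self _ _))
  set F' := F.restrict hFR with hF'
  set H' := H.restrict hHR with hH'
  have hsurj : Function.Surjective F' := by
    rintro ⟨y, hy⟩
    have hy' : y ∈ LinearMap.range (F ^ (k + 1)) := by rw [hk]; exact hy
    obtain ⟨z, hz⟩ := hy'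
    refine ⟨⟨(F ^ k) z, LinearMap.mem_range_self _ _⟩, ?_⟩
    apply Subtype.ext
    show F ((F ^ k) z) = y
    rw [← hz, pow_succ']
    rfl
  have hbij : Function.Bijective F' :=
    ⟨(LinearMap.injective_iff_surjective).mpr hsurj, hsurj⟩
  have hrel : H' ∘ₗ F' - F' ∘ₗ H' = (-2 : K) • F' := by
    ext x
    simp only [LinearMap.sub_apply, LinearMap.comp_apply, LinearMap.smul_apply,
      Submodule.coe_sub, SetLike.val_smul, hF', hH', LinearMap.restrict_coe_apply]
    rw [hhf]
    module
  have h0 := aux_trace_trick H' F' (-2 : K) (by norm_num) hrel hbij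
  rw [Submodule.finrank_eq_zero] at h0
  exact ⟨k, by rw [← LinearMap.range_eq_bot]; exact h0⟩

end AuxLemmas

/-- Every graded representation of `sl₂` (grading: `h` of degree 0, `e, f` of degree 1)
which is irreducible as a graded representation — i.e. has no nonzero proper invariant
subrepresentation `W` which is graded, `W = (W ⊓ V₀) ⊔ (W ⊓ V₁)` — is irreducible as an
ordinary representation of `sl₂`. -/
theorem graded_irreducible_is_irreducible {K V : Type*} [Field K] [CharZero K]
    [AddCommGroup V] [Module K V] [FiniteDimensional K V] [Nontrivial V]
    (E H F : V →ₗ[K] V)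
    (hhe : H ∘ₗ E - E ∘ₗ H = (2 : K) • E)
    (hhf : H ∘ₗ F - F ∘ₗ H = (-2 : K) • F)
    (hef : E ∘ₗ F - F ∘ₗ E = H)
    (V0 V1 : Submodule K V) (hc : IsCompl V0 V1)
    (hH0 : ∀ x ∈ V0, H x ∈ V0) (hH1 : ∀ x ∈ V1, H x ∈ V1)
    (hE0 : ∀ x ∈ V0, E x ∈ V1) (hE1 : ∀ x ∈ V1, E x ∈ V0)
    (hF0 : ∀ x ∈ V0, F x ∈ V1) (hF1 : ∀ x ∈ V1, F x ∈ V0)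
    (hgirr : ∀ W : Submodule K V, (∀ x ∈ W, E x ∈ W) → (∀ x ∈ W, H x ∈ W) →
      (∀ x ∈ W, F x ∈ W) → W = (W ⊓ V0) ⊔ (W ⊓ V1) → W = ⊥ ∨ W = ⊤) :
    ∀ W : Submodule K V, (∀ x ∈ W, E x ∈ W) → (∀ x ∈ W, H x ∈ W) →
      (∀ x ∈ W, F x ∈ W) → W = ⊥ ∨ W = ⊤ := by
  -- pointwise versions of the bracket relations
  have hefp : ∀ x : V, E (F x) = F (E x) + H x := by
    intro x
    have hx := LinearMap.ext_iff.mp hef x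
    simp only [LinearMap.sub_apply, LinearMap.comp_apply] at hx
    rw [← hx]; module
  have hhfp : ∀ x : V, H (F x) = F (H x) - (2 : K) • F x := by
    intro x
    have hx := LinearMap.ext_iff.mp hhf x
    simp only [LinearMap.sub_apply, LinearMap.comp_apply, LinearMap.smul_apply] at hx
    have hx2 : H (F x) = F (H x) + (-2 : K) • F x := sub_eq_iff_eq_add'.mp hx
    rw [hx2]; module
  have hhep : ∀ x : V, E (H x) = H (E x) - (2 : K) • E x := by
    intro x
    have hx := LinearMap.ext_iff.mp hhe x
    simp only [LinearMap.sub_apply, LinearMap.comp_apply, LinearMap.smul_apply] at hx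
    rw [← hx]; module
  have hsplit : ∀ a b : V, a ∈ V0 → b ∈ V1 → a + b = 0 → a = 0 ∧ b = 0 := by
    intro a b ha hb hab
    have hba : a = -b := eq_neg_of_add_eq_zero_left hab
    have ha1 : a ∈ V1 := hba ▸ neg_mem hb
    have ha0 : a = 0 := (Submodule.disjoint_def.mp hc.disjoint) a ha ha1
    refine ⟨ha0, ?_⟩
    rw [ha0, zero_add] at hab
    exact hab
  intro W hWE hWH hWF
  -- the graded part of W
  set U : Submodule K V := (W ⊓ V0) ⊔ (W ⊓ V1) with hUdef
  have hUle : U ≤ W := sup_le inf_le_left inf_le_left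
  have hUE : ∀ x ∈ U, E x ∈ U := by
    intro x hx
    obtain ⟨a, ha, b, hb, rfl⟩ := Submodule.mem_sup.mp hx
    rw [map_add]
    exact add_mem
      (Submodule.mem_sup_right ⟨hWE a ha.1, hE0 a ha.2⟩)
      (Submodule.mem_sup_left ⟨hWE b hb.1, hE1 b hb.2⟩)
  have hUH : ∀ x ∈ U, H x ∈ U := by
    intro x hx
    obtain ⟨a, ha, b, hb, rfl⟩ := Submodule.mem_sup.mp hx
    rw [map_add]
    exact add_mem
      (Submodule.mem_sup_left ⟨hWH a ha.1, hH0 a ha.2⟩)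
      (Submodule.mem_sup_right ⟨hWH b hb.1, hH1 b hb.2⟩)
  have hUF : ∀ x ∈ U, F x ∈ U := by
    intro x hx
    obtain ⟨a, ha, b, hb, rfl⟩ := Submodule.mem_sup.mp hx
    rw [map_add]
    exact add_mem
      (Submodule.mem_sup_right ⟨hWF a ha.1, hF0 a ha.2⟩)
      (Submodule.mem_sup_left ⟨hWF b hb.1, hF1 b hb.2⟩)
  have hUgr : U = (U ⊓ V0) ⊔ (U ⊓ V1) := by
    apply le_antisymm
    · apply sup_le
      · exact le_trans (le_inf le_sup_left inf_le_right) le_sup_left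
      · exact le_trans (le_inf le_sup_right inf_le_right) le_sup_right
    · exact sup_le inf_le_left inf_le_left
  rcases hgirr U hUE hUH hUF hUgr with hU | hU
  · -- U = ⊥ : show W = ⊥
    left
    have hWV0 : W ⊓ V0 = ⊥ := by
      rw [← le_bot_iff, ← hU]; exact le_sup_left
    have hWV1 : W ⊓ V1 = ⊥ := by
      rw [← le_bot_iff, ← hU]; exact le_sup_right
    by_contra hWne
    -- find a primitive eigenvector in W
    obtain ⟨v, hvW, hvne, hvE⟩ := aux_exists_ker E H hhe W hWE hWH hWne
    obtain ⟨m, hm⟩ := aux_F_nilpotent H F hhfp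
    obtain ⟨w, μ, hwW, hwne, hwE, hwH⟩ :=
      aux_exists_eigen E H F hefp hhfp hhep W hWH m v hvW hvne hvE (by simp [hm])
    -- decompose w into graded components
    have hwtop : w ∈ V0 ⊔ V1 := by
      rw [codisjoint_iff.mp hc.codisjoint]; trivial
    obtain ⟨w0, hw0, w1, hw1, hw01⟩ := Submodule.mem_sup.mp hwtop
    -- components are primitive eigenvectors
    have hE01 : E w0 = 0 ∧ E w1 = 0 := by
      have h1 : E w1 + E w0 = 0 := by
        rw [add_comm, ← map_add, hw01]; exact hwE
      have h2 := hsplit (E w1) (E w0) (hE1 w1 hw1) (hE0 w0 hw0) h1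
      exact ⟨h2.2, h2.1⟩
    have hH01 : H w0 = μ • w0 ∧ H w1 = μ • w1 := by
      have hsum : H w0 + H w1 = μ • w0 + μ • w1 := by
        have h := hwH
        rw [← hw01, map_add, smul_add] at h
        exact h
      have h1 : (H w0 - μ • w0) + (H w1 - μ • w1) = 0 := by
        rw [sub_add_sub_comm, hsum, sub_self]
      have h2 := hsplit _ _ (sub_mem (hH0 w0 hw0) (Submodule.smul_mem _ _ hw0))
        (sub_mem (hH1 w1 hw1) (Submodule.smul_mem _ _ hw1)) h1
      exact ⟨sub_eq_zero.mp h2.1, sub_eq_zero.mp h2.2⟩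
    by_cases hw0z : w0 = 0
    · -- w = w1 ∈ W ⊓ V1 = ⊥, contradiction
      have hmem : w ∈ W ⊓ V1 := ⟨hwW, by rw [← hw01, hw0z, zero_add]; exact hw1⟩
      rw [hWV1] at hmem
      exact hwne hmem
    · -- the string module spanned by the F^k w0 is everything; w1 must vanish
      have hw1z : w1 = 0 := by
        set Z : Submodule K V :=
          Submodule.span K (Set.range fun k : ℕ => (F ^ k) w0) with hZ
        have hmemZ : ∀ k : ℕ, (F ^ k) w0 ∈ Z := fun k =>
          Submodule.subset_span ⟨k, rfl⟩
        have hHFk : ∀ k : ℕ, H ((F ^ k) w0) = (μ - 2 * k) • (F ^ k) w0 := by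
          intro k
          rw [aux_HF_pow H F hhfp k w0, hH01.1, map_smul]
          module
        have hZE : ∀ x ∈ Z, E x ∈ Z := by
          intro x hx
          rw [hZ] at hx
          induction hx using Submodule.span_induction with
          | mem x hxx =>
            obtain ⟨k, rfl⟩ := hxx
            cases k with
            | zero =>
              simp only [pow_zero, Module.End.one_apply]
              rw [hE01.1]; exact zero_mem _
            | succ k =>
              rw [aux_EF_pow E H F hefp hhfp w0 hE01.1 k, hH01.1, ← sub_smul, map_smul]
              exact Submodule.smul_mem _ _ (Submodule.smul_mem _ _ (hmemZ k))
          | zero => rw [map_zero]; exact zero_mem _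
          | add x y _ _ hx' hy' => rw [map_add]; exact add_mem hx' hy'
          | smul c x _ hx' => rw [map_smul]; exact Submodule.smul_mem _ _ hx'
        have hZH : ∀ x ∈ Z, H x ∈ Z := by
          intro x hx
          rw [hZ] at hx
          induction hx using Submodule.span_induction with
          | mem x hxx =>
            obtain ⟨k, rfl⟩ := hxx
            rw [hHFk k]
            exact Submodule.smul_mem _ _ (hmemZ k)
          | zero => rw [map_zero]; exact zero_mem _
          | add x y _ _ hx' hy' => rw [map_add]; exact add_mem hx' hy'
          | smul c x _ hx' => rw [map_smul]; exact Submodule.smul_mem _ _ hx'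
        have hZF : ∀ x ∈ Z, F x ∈ Z := by
          intro x hx
          rw [hZ] at hx
          induction hx using Submodule.span_induction with
          | mem x hxx =>
            obtain ⟨k, rfl⟩ := hxx
            have h1 : F ((F ^ k) w0) = (F ^ (k + 1)) w0 := by rw [pow_succ']; rfl
            rw [h1]; exact hmemZ (k + 1)
          | zero => rw [map_zero]; exact zero_mem _
          | add x y _ _ hx' hy' => rw [map_add]; exact add_mem hx' hy'
          | smul c x _ hx' => rw [map_smul]; exact Submodule.smul_mem _ _ hx'
        have hpar : ∀ k : ℕ, (F ^ k) w0 ∈ V0 ∨ (F ^ k) w0 ∈ V1 := by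
          intro k
          induction k with
          | zero => left; simpa using hw0
          | succ k ih =>
            have hstep : (F ^ (k + 1)) w0 = F ((F ^ k) w0) := by rw [pow_succ']; rfl
            rcases ih with h | h
            · right; rw [hstep]; exact hF0 _ h
            · left; rw [hstep]; exact hF1 _ h
        have hZgr : Z = (Z ⊓ V0) ⊔ (Z ⊓ V1) := by
          apply le_antisymm
          · rw [hZ]
            apply Submodule.span_le.mpr
            rintro x ⟨k, rfl⟩
            rcases hpar k with h | h
            · exact Submodule.mem_sup_left ⟨hmemZ k, h⟩
            · exact Submodule.mem_sup_right ⟨hmemZ k, h⟩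
          · exact sup_le inf_le_left inf_le_left
        have hZtop : Z = ⊤ := by
          rcases hgirr Z hZE hZH hZF hZgr with h | h
          · exfalso
            have h0 : w0 ∈ Z := by simpa using hmemZ 0
            rw [h] at h0
            exact hw0z (by simpa using h0)
          · exact h
        -- eigenspace decomposition
        set S : Submodule K V := ⨆ (ν : K) (_ : ν ≠ μ), Module.End.eigenspace H ν with hS
        have hZY : Z ≤ Submodule.span K {w0} ⊔ S := by
          rw [hZ]
          apply Submodule.span_le.mpr
          rintro x ⟨k, rfl⟩
          cases k with
          | zero =>
            apply Submodule.mem_sup_left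
            simpa using Submodule.mem_span_singleton_self w0
          | succ k =>
            apply Submodule.mem_sup_right
            have hne : μ - 2 * ((k : K) + 1) ≠ μ := by
              intro hcontra
              have h0 : (2 : K) * ((k : K) + 1) = 0 := sub_eq_self.mp hcontra
              rcases mul_eq_zero.mp h0 with h' | h'
              · norm_num at h'
              · exact Nat.cast_add_one_ne_zero k h'
            have hmem : (F ^ (k + 1)) w0 ∈
                Module.End.eigenspace H (μ - 2 * ((k : K) + 1)) := by
              rw [Module.End.mem_eigenspace_iff]
              have h1 := hHFk (k + 1)
              push_cast at h1 ⊢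
              exact h1
            rw [hS]
            exact Submodule.mem_iSup_of_mem _ (Submodule.mem_iSup_of_mem hne hmem)
        have hYtop : Submodule.span K {w0} ⊔ S = ⊤ := top_unique (hZtop ▸ hZY)
        have hw1Y : w1 ∈ Submodule.span K {w0} ⊔ S := by rw [hYtop]; trivial
        obtain ⟨s, hs, y, hy, hsy⟩ := Submodule.mem_sup.mp hw1Y
        have hsEig : s ∈ Module.End.eigenspace H μ := by
          obtain ⟨c, rfl⟩ := Submodule.mem_span_singleton.mp hs
          rw [Module.End.mem_eigenspace_iff, map_smul, hH01.1, smul_comm]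
        have hw1Eig : w1 ∈ Module.End.eigenspace H μ := by
          rw [Module.End.mem_eigenspace_iff]; exact hH01.2
        have hyEig : y ∈ Module.End.eigenspace H μ := by
          have hy' : y = w1 - s := by rw [← hsy]; abel
          rw [hy']; exact sub_mem hw1Eig hsEig
        have hdisj : Disjoint (Module.End.eigenspace H μ) S :=
          Module.End.eigenspaces_iSupIndep H (i := μ)
        have hy0 : y = 0 := Submodule.disjoint_def.mp hdisj y hyEig hy
        have hw1V0 : w1 ∈ V0 := by
          rw [← hsy, hy0, add_zero]
          obtain ⟨c, rfl⟩ := Submodule.mem_span_singleton.mp hs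
          exact Submodule.smul_mem _ _ hw0
        exact (Submodule.disjoint_def.mp hc.disjoint) w1 hw1V0 hw1
      -- now w = w0 ∈ W ⊓ V0 = ⊥, contradiction
      have hmem : w ∈ W ⊓ V0 := ⟨hwW, by rw [← hw01, hw1z, add_zero]; exact hw0⟩
      rw [hWV0] at hmem
      exact hwne hmem
  · -- U = ⊤ : W = ⊤
    right
    exact top_unique (by rw [← hU]; exact hUle)
end

section
/- Let F be a field of characteristic 0, V = F^n, and let A ∈ sl(V) be a regular nilpotent element (a single nilpotent Jordan block). Let M = v₁ ⊗ φ₂ − v₂ ⊗ φ₁ for vectors v₁, v₂ ∈ ker A^i and functionals φ₁, φ₂ ∈ ker (A*)^{n−i}, where 0 < i < n. If there exists a nilpotent matrix B with [A, B] = M, then (v₁)_i (φ₂)_{i+1} − (v₂)_i (φ₁)_{i+1} = 0, where (·)_j denotes the j-th coordinate in the Jordan basis. -/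
open Matrix

/-- Let `A` be the regular nilpotent `n × n` Jordan block (`A e_j = e_{j−1}`, 0-indexed),
let `0 < i < n`, let `v₁, v₂ ∈ ker A^i` (i.e. supported on the first `i` coordinates) and
`φ₁, φ₂ ∈ ker (Aᵀ)^{n−i}` (i.e. supported on the last `n − i` coordinates), and set
`M = v₁ ⊗ φ₂ − v₂ ⊗ φ₁`.  If there is a nilpotent matrix `B` with `[A, B] = M`, then
`(v₁)_i (φ₂)_{i+1} − (v₂)_i (φ₁)_{i+1} = 0` (1-indexed coordinates, i.e. 0-indexed
entries `i−1` and `i`). -/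
theorem key_lemma_entry_vanishes {F : Type*} [Field F] [CharZero F]
    (n i : ℕ) (hi0 : 0 < i) (hin : i < n)
    (A : Matrix (Fin n) (Fin n) F)
    (hA : A = Matrix.of fun j k : Fin n => if (j : ℕ) + 1 = (k : ℕ) then (1 : F) else 0)
    (v₁ v₂ φ₁ φ₂ : Fin n → F)
    (hv₁ : ∀ j : Fin n, i ≤ (j : ℕ) → v₁ j = 0)
    (hv₂ : ∀ j : Fin n, i ≤ (j : ℕ) → v₂ j = 0)
    (hφ₁ : ∀ j : Fin n, (j : ℕ) < i → φ₁ j = 0)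
    (hφ₂ : ∀ j : Fin n, (j : ℕ) < i → φ₂ j = 0)
    (B : Matrix (Fin n) (Fin n) F) (hBnil : IsNilpotent B)
    (hB : A * B - B * A = Matrix.vecMulVec v₁ φ₂ - Matrix.vecMulVec v₂ φ₁) :
    v₁ ⟨i - 1, by omega⟩ * φ₂ ⟨i, by omega⟩ - v₂ ⟨i - 1, by omega⟩ * φ₁ ⟨i, by omega⟩ = 0 := by
  -- entrywise formula for A * B
  have hAB : ∀ (j k : Fin n) (h : (j : ℕ) + 1 < n),
      (A * B) j k = B ⟨(j : ℕ) + 1, h⟩ k := by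
    intro j k h
    rw [Matrix.mul_apply]
    rw [Finset.sum_eq_single (⟨(j : ℕ) + 1, h⟩ : Fin n)]
    · simp [hA]
    · intro l _ hl
      have : (j : ℕ) + 1 ≠ (l : ℕ) := by
        intro hc; exact hl (Fin.ext hc.symm)
      simp [hA, this]
    · simp
  have hAB' : ∀ (j k : Fin n), ¬ ((j : ℕ) + 1 < n) → (A * B) j k = 0 := by
    intro j k h
    rw [Matrix.mul_apply]
    apply Finset.sum_eq_zero
    intro l _
    have : (j : ℕ) + 1 ≠ (l : ℕ) := by omega
    simp [hA, this]
  have hBA : ∀ (j k : Fin n) (h : 0 < (k : ℕ)),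
      (B * A) j k = B j ⟨(k : ℕ) - 1, by omega⟩ := by
    intro j k h
    rw [Matrix.mul_apply]
    rw [Finset.sum_eq_single (⟨(k : ℕ) - 1, by omega⟩ : Fin n)]
    · have : ((k : ℕ) - 1) + 1 = (k : ℕ) := by omega
      simp [hA, this]
    · intro l _ hl
      have : ¬ ((l : ℕ) + 1 = (k : ℕ)) := by
        intro hc; apply hl; ext; simp; omega
      simp [hA, this]
    · simp
  have hBA' : ∀ (j k : Fin n), (k : ℕ) = 0 → (B * A) j k = 0 := by
    intro j k h
    rw [Matrix.mul_apply]
    apply Finset.sum_eq_zero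
    intro l _
    have : ¬ ((l : ℕ) + 1 = (k : ℕ)) := by omega
    simp [hA, this]
  -- M entrywise
  have hM : ∀ j k : Fin n, (A * B) j k - (B * A) j k = v₁ j * φ₂ k - v₂ j * φ₁ k := by
    intro j k
    have := congrFun (congrFun hB j) k
    simpa [Matrix.vecMulVec_apply] using this
  -- M vanishes unless j < i ≤ k
  have hM0 : ∀ j k : Fin n, ¬ ((j : ℕ) < i ∧ i ≤ (k : ℕ)) →
      v₁ j * φ₂ k - v₂ j * φ₁ k = 0 := by
    intro j k h
    by_cases hj : (j : ℕ) < i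
    · have hk : (k : ℕ) < i := by omega
      rw [hφ₁ k hk, hφ₂ k hk]; ring
    · rw [hv₁ j (by omega), hv₂ j (by omega)]; ring
  -- B is upper triangular
  have hlow : ∀ r c : Fin n, (c : ℕ) < (r : ℕ) → B r c = 0 := by
    have key : ∀ m : ℕ, ∀ r c : Fin n, (c : ℕ) = m → (c : ℕ) < (r : ℕ) → B r c = 0 := by
      intro m
      induction m with
      | zero =>
          intro r c hc hrc
          have hj : ((r : ℕ) - 1) + 1 < n := by omega
          set j : Fin n := ⟨(r : ℕ) - 1, by omega⟩
          have h1 := hM j c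
          rw [hM0 j c (by simp [j]; omega)] at h1
          rw [hAB j c (by simp [j]; omega), hBA' j c hc] at h1
          have : (⟨(j : ℕ) + 1, by simp [j]; omega⟩ : Fin n) = r := by ext; simp [j]; omega
          rw [this] at h1
          simpa using h1
      | succ m ih =>
          intro r c hc hrc
          set j : Fin n := ⟨(r : ℕ) - 1, by omega⟩
          have h1 := hM j c
          rw [hM0 j c (by simp [j]; omega)] at h1
          rw [hAB j c (by simp [j]; omega), hBA j c (by omega)] at h1
          have e1 : (⟨(j : ℕ) + 1, by simp [j]; omega⟩ : Fin n) = r := by ext; simp [j]; omega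
          rw [e1] at h1
          have e2 : B j ⟨(c : ℕ) - 1, by omega⟩ = 0 := by
            apply ih
            · simp; omega
            · simp [j]; omega
          rw [e2] at h1
          simpa using h1
    intro r c hrc
    exact key (c : ℕ) r c rfl hrc
  -- nilpotent upper triangular ⇒ zero diagonal
  have hdiag : ∀ j : Fin n, B j j = 0 := by
    obtain ⟨m, hm⟩ := hBnil
    have hpow : ∀ m : ℕ, (∀ r c : Fin n, (c : ℕ) < (r : ℕ) → (B ^ m) r c = 0) ∧
        (∀ j : Fin n, (B ^ m) j j = (B j j) ^ m) := by
      intro m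
      induction m with
      | zero =>
          constructor
          · intro r c hrc
            have : r ≠ c := by intro h; rw [h] at hrc; omega
            simp [Matrix.one_apply_ne this]
          · intro j; simp
      | succ m ih =>
          obtain ⟨ih1, ih2⟩ := ih
          have mul_entry : ∀ r c : Fin n, (B ^ (m + 1)) r c =
              ∑ l, (B ^ m) r l * B l c := by
            intro r c; rw [pow_succ, Matrix.mul_apply]
          constructor
          · intro r c hrc
            rw [mul_entry]
            apply Finset.sum_eq_zero
            intro l _
            by_cases hl : (l : ℕ) < (r : ℕ)
            · rw [ih1 r l hl, zero_mul]
            · rw [hlow l c (by omega), mul_zero]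
          · intro j
            rw [mul_entry, Finset.sum_eq_single j]
            · rw [ih2 j, pow_succ]
            · intro l _ hl
              by_cases hl' : (l : ℕ) < (j : ℕ)
              · rw [ih1 j l hl', zero_mul]
              · have : (j : ℕ) < (l : ℕ) := by
                  rcases lt_or_eq_of_le (not_lt.mp hl') with h | h
                  · exact h
                  · exact absurd (Fin.ext h.symm) hl
                rw [hlow l j this, mul_zero]
            · simp
    intro j
    have h1 : (B j j) ^ m = 0 := by rw [← (hpow m).2 j, hm]; simp
    have hm0 : m ≠ 0 := by
      intro h
      rw [h, pow_zero] at hm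
      have := congrFun (congrFun hm j) j
      simp [Matrix.one_apply_eq] at this
    exact pow_eq_zero_iff hm0 |>.mp h1
  -- conclude
  have h1 := hM ⟨i - 1, by omega⟩ ⟨i, by omega⟩
  rw [hAB _ _ (by simp; omega), hBA _ _ (by simp; omega)] at h1
  rw [show ((⟨(((⟨i - 1, by omega⟩ : Fin n)) : ℕ) + 1, by simp; omega⟩ : Fin n)) = ⟨i, by omega⟩
    from Fin.ext (by simp; omega)] at h1
  rw [show ((⟨(((⟨i, by omega⟩ : Fin n)) : ℕ) - 1, by omega⟩ : Fin n)) = ⟨i - 1, by omega⟩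
    from Fin.ext (by simp)] at h1
  rw [hdiag, hdiag] at h1
  linear_combination -h1
end

section
/- Let A be the n×n nilpotent Jordan block over a field F. If B is an n×n matrix such that [A, B] is supported in the top-right i × (n−i) block (rows 1, …, i and columns i+1, …, n), then B is upper triangular. -/
open Matrix

/-- Let `A` be the regular nilpotent `n × n` Jordan block.  If `[A, B]` is supported in
the strictly-upper-right `i × (n − i)` block (its `(j,k)` entry vanishes unless
`j ≤ i < k`, 1-indexed; 0-indexed: unless `j < i ≤ k`), then `B` is upper triangular. -/
theorem commutator_block_implies_upper_triangular {F : Type*} [Field F]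
    (n i : ℕ) (hi0 : 0 < i) (hin : i < n)
    (A B : Matrix (Fin n) (Fin n) F)
    (hA : A = Matrix.of fun j k : Fin n => if (j : ℕ) + 1 = (k : ℕ) then (1 : F) else 0)
    (hC : ∀ j k : Fin n, ¬((j : ℕ) < i ∧ i ≤ (k : ℕ)) → (A * B - B * A) j k = 0) :
    ∀ j k : Fin n, (k : ℕ) < (j : ℕ) → B j k = 0 := by
  have hAB : ∀ (j k : Fin n) (h : (j:ℕ)+1 < n), (A*B) j k = B ⟨(j:ℕ)+1, h⟩ k := by
    intro j k h
    rw [Matrix.mul_apply]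
    rw [Finset.sum_eq_single (⟨(j:ℕ)+1, h⟩ : Fin n)]
    · simp [hA]
    · intro l _ hl
      have : (j:ℕ)+1 ≠ (l:ℕ) := fun he => hl (Fin.ext he.symm)
      simp [hA, this]
    · simp
  have hBA : ∀ (j k : Fin n) (h : 0 < (k:ℕ)),
      (B*A) j k = B j ⟨(k:ℕ)-1, by omega⟩ := by
    intro j k h
    rw [Matrix.mul_apply]
    rw [Finset.sum_eq_single (⟨(k:ℕ)-1, by omega⟩ : Fin n)]
    · have : ((k:ℕ)-1)+1 = (k:ℕ) := by omega
      simp [hA, this]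
    · intro l _ hl
      have : (l:ℕ)+1 ≠ (k:ℕ) := by
        intro he
        apply hl
        apply Fin.ext
        simp
        omega
      simp [hA, this]
    · simp
  have hBA0 : ∀ (j k : Fin n), (k:ℕ) = 0 → (B*A) j k = 0 := by
    intro j k hk
    rw [Matrix.mul_apply]
    apply Finset.sum_eq_zero
    intro l _
    have : (l:ℕ)+1 ≠ (k:ℕ) := by omega
    simp [hA, this]
  have main : ∀ m : ℕ, ∀ j k : Fin n, (k:ℕ) = m → (k:ℕ) < (j:ℕ) → B j k = 0 := by
    intro m
    induction m with
    | zero =>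
      intro j k hk hjk
      have hj : (j:ℕ) - 1 + 1 < n := by omega
      have h0 := hC ⟨(j:ℕ)-1, by omega⟩ k (by rintro ⟨h1, h2⟩; omega)
      rw [Matrix.sub_apply, hAB _ _ hj, hBA0 _ _ hk] at h0
      have hje : (⟨(j:ℕ)-1+1, hj⟩ : Fin n) = j := Fin.ext (by simp; omega)
      rw [hje] at h0
      simpa using h0
    | succ m ih =>
      intro j k hk hjk
      have hj : (j:ℕ) - 1 + 1 < n := by omega
      have h0 := hC ⟨(j:ℕ)-1, by omega⟩ k (by rintro ⟨h1, h2⟩; simp at h1; omega)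
      rw [Matrix.sub_apply, hAB _ _ hj, hBA _ _ (by omega)] at h0
      have hje : (⟨(j:ℕ)-1+1, hj⟩ : Fin n) = j := Fin.ext (by simp; omega)
      rw [hje, sub_eq_zero] at h0
      rw [h0]
      exact ih ⟨(j:ℕ)-1, by omega⟩ ⟨(k:ℕ)-1, by omega⟩ (by simp; omega) (by simp; omega)
  intro j k hjk
  exact main (k:ℕ) j k rfl hjk
end

section
/- Consider V × V* as a symplectic vector space with symplectic form ω((v,φ),(w,ψ)) = ψ(v) − φ(w), and similarly (V × V*) × (V × V*) with the product symplectic form and Lagrangian L = V* × V* (the second factors). Let A be the nilpotent Jordan block on V = F^n and for 0 ≤ i ≤ n let L_{ii} = (ker A^i) × (ker (A*)^{n−i}) × (ker A^i) × (ker (A*)^{n−i}). Let Z ⊆ L_{ii} be a linear subspace with dim Z < 2n = dim L_{ii}. Then Z is not weakly coisotropic in (V × V*)² with respect to L; in particular any weakly coisotropic subvariety of L_{ii} must equal L_{ii}. -/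
open Submodule Module

namespace JordanKernels

variable (F : Type*) [Field F] (n : ℕ)

/-- `ker A^i` for the `n × n` nilpotent Jordan block `A`: vectors supported on the
first `i` coordinates. -/
def Kpow (i : ℕ) : Submodule F (Fin n → F) where
  carrier := {v | ∀ j : Fin n, i ≤ (j : ℕ) → v j = 0}
  add_mem' := by intro a b ha hb j hj; simp [ha j hj, hb j hj]
  zero_mem' := by intro j _; rfl
  smul_mem' := by intro c a ha j hj; simp [ha j hj]

/-- `ker (A*)^{n−i}`: covectors supported on the last `n − i` coordinates. -/
def Cpow (i : ℕ) : Submodule F (Fin n → F) where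
  carrier := {φ | ∀ j : Fin n, (j : ℕ) < i → φ j = 0}
  add_mem' := by intro a b ha hb j hj; simp [ha j hj, hb j hj]
  zero_mem' := by intro j _; rfl
  smul_mem' := by intro c a ha j hj; simp [ha j hj]

/-- `L_{ii} = (ker A^i) × (ker (A*)^{n−i}) × (ker A^i) × (ker (A*)^{n−i})`. -/
def Lii (i : ℕ) : Submodule F (((Fin n → F) × (Fin n → F)) × ((Fin n → F) × (Fin n → F))) :=
  ((Kpow F n i).prod (Cpow F n i)).prod ((Kpow F n i).prod (Cpow F n i))

/-- The Lagrangian `L = V* × V*` (the second factors) in `(V × V*) × (V × V*)`. -/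
def Lagr : Submodule F (((Fin n → F) × (Fin n → F)) × ((Fin n → F) × (Fin n → F))) :=
  ((⊥ : Submodule F (Fin n → F)).prod ⊤).prod ((⊥ : Submodule F (Fin n → F)).prod ⊤)

end JordanKernels

open JordanKernels

/-! If `p(Z^⊥) ⊆ p(Z)` for the projection `p` with kernel an isotropic subspace `L`, then
`Z^⊥ + L ⊆ Z + L`, while isotropy gives `Z^⊥ ∩ L ⊆ (Z + L)^⊥`. Counting dimensions,
`dim Z^⊥ + dim L - dim (Z + L)^⊥ ≤ dim (Z + L)`, i.e. `dim L ≤ dim Z` for a nondegenerate form.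
For `L = V* × V*` in `(V × V*)²` this forces `dim Z ≥ 2n`. -/

namespace LinearMap.BilinForm

variable {K V : Type*} [Field K] [AddCommGroup V] [Module K V]

def IsWeaklyCoisotropic (B : LinearMap.BilinForm K V) (L Z : Submodule K V) : Prop :=
  map L.mkQ (B.orthogonal Z) ≤ map L.mkQ Z

theorem IsWeaklyCoisotropic.finrank_le [FiniteDimensional K V] {B : LinearMap.BilinForm K V}
    (hB : B.Nondegenerate) {L Z : Submodule K V} (hL : L ≤ B.orthogonal L)
    (hZ : B.IsWeaklyCoisotropic L Z) : finrank K L ≤ finrank K Z := by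
  have hsup : B.orthogonal Z ⊔ L ≤ Z ⊔ L := by
    rw [IsWeaklyCoisotropic, LinearMap.map_le_map_iff, ker_mkQ] at hZ
    exact sup_le hZ le_sup_right
  have hinf : B.orthogonal Z ⊓ L ≤ B.orthogonal (Z ⊔ L) := by
    rintro x ⟨hxZ, hxL⟩ y hy
    obtain ⟨z, hz, l, hl, rfl⟩ := mem_sup.1 hy
    rw [add_left, hxZ z hz, hL hxL l hl, add_zero]
  have hsum := finrank_sup_add_finrank_inf_eq (B.orthogonal Z) L
  have hsup_le := finrank_mono hsup
  have hinf_le := finrank_mono hinf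
  rw [finrank_orthogonal hB] at hsum hinf_le
  have := Submodule.finrank_le (Z ⊔ L)
  have := Submodule.finrank_le Z
  omega

end LinearMap.BilinForm

namespace JordanKernels

variable (F : Type*) [Field F] (n : ℕ)

def symplecticForm :
    LinearMap.BilinForm F (((Fin n → F) × (Fin n → F)) × ((Fin n → F) × (Fin n → F))) :=
  LinearMap.mk₂ F (fun x y => ((∑ j, y.1.2 j * x.1.1 j) - (∑ j, x.1.2 j * y.1.1 j))
      + ((∑ j, y.2.2 j * x.2.1 j) - (∑ j, x.2.2 j * y.2.1 j)))
    (by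
      intros
      simp only [Prod.fst_add, Prod.snd_add, Pi.add_apply, mul_add, add_mul,
        Finset.sum_add_distrib]
      ring)
    (by
      intros
      simp only [Prod.smul_fst, Prod.smul_snd, Pi.smul_apply, smul_eq_mul, Finset.mul_sum,
        mul_sub, mul_add, mul_assoc, mul_left_comm])
    (by
      intros
      simp only [Prod.fst_add, Prod.snd_add, Pi.add_apply, mul_add, add_mul,
        Finset.sum_add_distrib]
      ring)
    (by
      intros
      simp only [Prod.smul_fst, Prod.smul_snd, Pi.smul_apply, smul_eq_mul, Finset.mul_sum,
        mul_sub, mul_add, mul_assoc, mul_left_comm])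

theorem symplecticForm_apply
    (x y : ((Fin n → F) × (Fin n → F)) × ((Fin n → F) × (Fin n → F))) :
    symplecticForm F n x y = ((∑ j, y.1.2 j * x.1.1 j) - (∑ j, x.1.2 j * y.1.1 j))
      + ((∑ j, y.2.2 j * x.2.1 j) - (∑ j, x.2.2 j * y.2.1 j)) := rfl

theorem symplecticForm_isAlt : (symplecticForm F n).IsAlt := by
  intro x
  simp only [symplecticForm_apply, mul_comm (x.1.2 _), mul_comm (x.2.2 _), sub_self, add_zero]

theorem symplecticForm_nondegenerate : (symplecticForm F n).Nondegenerate := by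
  refine ((symplecticForm_isAlt F n).isRefl.nondegenerate_iff_separatingLeft).2 fun x hx => ?_
  ext j
  · simpa [symplecticForm_apply, Pi.single_apply] using hx ((0, Pi.single j 1), 0)
  · simpa [symplecticForm_apply, Pi.single_apply] using hx ((Pi.single j 1, 0), 0)
  · simpa [symplecticForm_apply, Pi.single_apply] using hx (0, (0, Pi.single j 1))
  · simpa [symplecticForm_apply, Pi.single_apply] using hx (0, (Pi.single j 1, 0))

theorem lagr_le_orthogonal_lagr : Lagr F n ≤ (symplecticForm F n).orthogonal (Lagr F n) := by
  rintro x ⟨⟨hx₁, -⟩, hx₂, -⟩ y ⟨⟨hy₁, -⟩, hy₂, -⟩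
  simp_all [symplecticForm_apply]

theorem lagr_eq_range_inr_prodMap_inr :
    Lagr F n = LinearMap.range ((LinearMap.inr F (Fin n → F) (Fin n → F)).prodMap
      (LinearMap.inr F (Fin n → F) (Fin n → F))) := by
  ext x
  simp [Lagr, Prod.ext_iff, eq_comm]

theorem finrank_lagr : finrank F (Lagr F n) = 2 * n := by
  rw [lagr_eq_range_inr_prodMap_inr, LinearMap.finrank_range_of_inj]
  · simp [two_mul]
  · exact Prod.map_injective.2 ⟨LinearMap.inr_injective, LinearMap.inr_injective⟩

end JordanKernels

theorem small_subspace_of_Lii_not_weakly_coisotropic_general {F : Type*} [Field F]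
    (n : ℕ)
    (Ω : LinearMap.BilinForm F (((Fin n → F) × (Fin n → F)) × ((Fin n → F) × (Fin n → F))))
    (hΩ : ∀ x y : ((Fin n → F) × (Fin n → F)) × ((Fin n → F) × (Fin n → F)),
      Ω x y = ((∑ j, y.1.2 j * x.1.1 j) - (∑ j, x.1.2 j * y.1.1 j))
        + ((∑ j, y.2.2 j * x.2.1 j) - (∑ j, x.2.2 j * y.2.1 j)))
    (Z : Submodule F (((Fin n → F) × (Fin n → F)) × ((Fin n → F) × (Fin n → F))))
    (hdim : Module.finrank F Z < 2 * n) :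
    ¬ (Submodule.map (Lagr F n).mkQ (Ω.orthogonal Z) ≤ Submodule.map (Lagr F n).mkQ Z) := by
  obtain rfl : Ω = symplecticForm F n := LinearMap.ext₂ hΩ
  intro hZ
  have h2n : 2 * n ≤ finrank F Z := finrank_lagr F n ▸
    LinearMap.BilinForm.IsWeaklyCoisotropic.finrank_le
      (symplecticForm_nondegenerate F n) (lagr_le_orthogonal_lagr F n) hZ
  exact hdim.not_ge h2n

/-- Equip `(V × V*)²`, `V = F^n`, with the product of the symplectic forms
`ω((v,φ),(w,ψ)) = ψ(v) − φ(w)` and the Lagrangian `L = V* × V*`.  Any subspace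
`Z ⊆ L_{ii}` with `dim Z < 2n` is not weakly coisotropic with respect to `L`; in
particular any weakly coisotropic subvariety of `L_{ii}` must be all of `L_{ii}`. -/
theorem small_subspace_of_Lii_not_weakly_coisotropic {F : Type*} [Field F]
    (n : ℕ) (hn : 0 < n) (i : ℕ) (hi : i ≤ n)
    (Ω : LinearMap.BilinForm F (((Fin n → F) × (Fin n → F)) × ((Fin n → F) × (Fin n → F))))
    (hΩ : ∀ x y : ((Fin n → F) × (Fin n → F)) × ((Fin n → F) × (Fin n → F)),
      Ω x y = ((∑ j, y.1.2 j * x.1.1 j) - (∑ j, x.1.2 j * y.1.1 j))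
        + ((∑ j, y.2.2 j * x.2.1 j) - (∑ j, x.2.2 j * y.2.1 j)))
    (Z : Submodule F (((Fin n → F) × (Fin n → F)) × ((Fin n → F) × (Fin n → F))))
    (hZ : Z ≤ Lii F n i) (hdim : Module.finrank F Z < 2 * n) :
    ¬ (Submodule.map (Lagr F n).mkQ (Ω.orthogonal Z) ≤ Submodule.map (Lagr F n).mkQ Z) :=
  small_subspace_of_Lii_not_weakly_coisotropic_general n Ω hΩ Z hdim
end
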